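/- arXiv:0804.0316 — 5 statements merged into one kernel-verified Lean document; each statement's English description precedes it below -/
import Mathlib

section
/- Let F1 and F2 be finite subsets of ℤ² such that F1 is uniquely determined by its row and column sums, |F1| = |F2|, and the error in the line sums equals 2α for a positive integer α. Then the symmetric difference F1 △ F2 can be partitioned into α pairwise disjoint staircases. -/
/-- Number of elements of `F` in row `i` (points with first coordinate `i`). -/
def rowSum (F : Finset (ℤ × ℤ)) (i : ℤ) : ℕ := (F.filter (fun p => p.1 = i)).card

/-- Number of elements of `F` in column `j` (points with second coordinate `j`). -/
def colSum (F : Finset (ℤ × ℤ)) (j : ℤ) : ℕ := (F.filter (fun p => p.2 = j)).card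

/-- The total error in the line sums of `F` and `G`:
`∑ i |r_i(F) − r_i(G)| + ∑ j |c_j(F) − c_j(G)|`. -/
noncomputable def lineError (F G : Finset (ℤ × ℤ)) : ℤ :=
  (∑ᶠ i : ℤ, |(rowSum F i : ℤ) - (rowSum G i : ℤ)|) +
  (∑ᶠ j : ℤ, |(colSum F j : ℤ) - (colSum G j : ℤ)|)

/-- `F` is uniquely determined by its row and column sums. -/
def UniquelyDetermined (F : Finset (ℤ × ℤ)) : Prop :=
  ∀ G : Finset (ℤ × ℤ),
    (∀ i, rowSum G i = rowSum F i) → (∀ j, colSum G j = colSum F j) → G = F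

/-- `T` is the set of points of a staircase with respect to `F1` and `F2`:
a finite sequence of distinct points `p 1, …, p n` such that consecutive points
alternate between `F1 \ F2` and `F2 \ F1`, and consecutive points alternately share
a column and a row (in one of the two possible phases). -/
def IsStaircaseSet (F1 F2 T : Finset (ℤ × ℤ)) : Prop :=
  ∃ (n : ℕ) (p : ℕ → ℤ × ℤ),
    1 ≤ n ∧
    -- the points are pairwise distinct
    (∀ i j, 1 ≤ i → i ≤ n → 1 ≤ j → j ≤ n → p i = p j → i = j) ∧
    -- `T` is the set of points of the staircase
    T = (Finset.Icc 1 n).image p ∧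
    -- every point lies in the symmetric difference
    (∀ i, 1 ≤ i → i ≤ n → p i ∈ (F1 \ F2) ∪ (F2 \ F1)) ∧
    -- of each two consecutive points, one is in `F1 \ F2` and the other in `F2 \ F1`
    (∀ i, 1 ≤ i → i + 1 ≤ n →
      ((p i ∈ F1 \ F2 ∧ p (i + 1) ∈ F2 \ F1) ∨
       (p i ∈ F2 \ F1 ∧ p (i + 1) ∈ F1 \ F2))) ∧
    -- alternation of shared columns and rows
    (((∀ i, 1 ≤ i → 2 * i + 1 ≤ n → (p (2 * i)).2 = (p (2 * i + 1)).2) ∧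
      (∀ i, 2 * i + 2 ≤ n → (p (2 * i + 1)).1 = (p (2 * i + 2)).1)) ∨
     ((∀ i, 1 ≤ i → 2 * i + 1 ≤ n → (p (2 * i)).1 = (p (2 * i + 1)).1) ∧
      (∀ i, 2 * i + 2 ≤ n → (p (2 * i + 1)).2 = (p (2 * i + 2)).2)))

/-!
Let `A = F1 \ F2` and `B = F2 \ F1`. In every row match as many points of `A` as possible with
points of `B` in that row, and likewise in every column. Row `i` keeps `|r_i(F1) - r_i(F2)|`
points unmatched, so the line-sum error counts the unmatched pairs (point, direction). Both
matchings are involutions, so together they split `A ∪ B` into alternating paths and cycles.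
There is no cycle, since swapping `F1` along one would keep all line sums. Each path is a
staircase whose two ends account for exactly two unmatched pairs, so there are `α` paths.
-/

open Finset Function

section AltWalk

variable {α : Type*} {ρ γ : α → α} {x : α}

def altMap (ρ γ : α → α) (k : ℕ) : α → α := if k % 2 = 0 then γ else ρ

def altWalk (ρ γ : α → α) (x : α) : ℕ → α
  | 0 => x
  | k + 1 => altMap ρ γ k (altWalk ρ γ x k)

lemma altMap_congr {k l : ℕ} (h : k % 2 = l % 2) : altMap ρ γ k = altMap ρ γ l := by
  simp only [altMap, h]

lemma altMap_succ_or (k : ℕ) :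
    altMap ρ γ k = γ ∧ altMap ρ γ (k + 1) = ρ ∨ altMap ρ γ k = ρ ∧ altMap ρ γ (k + 1) = γ := by
  rcases Nat.mod_two_eq_zero_or_one k with h | h
  · left; simp [altMap, h, Nat.succ_mod_two_eq_one_iff.2 h]
  · right; simp [altMap, h, Nat.succ_mod_two_eq_zero_iff.2 h]

lemma altMap_altWalk_succ (hρ : Involutive ρ) (hγ : Involutive γ) (k : ℕ) :
    altMap ρ γ k (altWalk ρ γ x (k + 1)) = altWalk ρ γ x k := by
  rcases altMap_succ_or (ρ := ρ) (γ := γ) k with ⟨h, -⟩ | ⟨h, -⟩ <;>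
    simp only [altWalk, h, hρ _, hγ _]

/-- At `k = 0` the truncated `k - 1` is `0`: stepping back from the start stays at `x = ρ x`. -/
lemma altMap_succ_altWalk (hρ : Involutive ρ) (hγ : Involutive γ) (hx : ρ x = x) (k : ℕ) :
    altMap ρ γ (k + 1) (altWalk ρ γ x k) = altWalk ρ γ x (k - 1) := by
  cases k with
  | zero => show altMap ρ γ 1 x = x; simpa [altMap] using hx
  | succ k => rw [altMap_congr (by omega : (k + 2) % 2 = k % 2), altMap_altWalk_succ hρ hγ]; rfl

/-- Reflecting a closed walk of odd length about its middle: the middle step stands still. -/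
lemma altWalk_succ_eq_of_eq_add_odd (hρ : Involutive ρ) (hγ : Involutive γ) {a j : ℕ}
    (h : altWalk ρ γ x a = altWalk ρ γ x (a + 2 * j + 1)) :
    altWalk ρ γ x (a + j + 1) = altWalk ρ γ x (a + j) := by
  induction j generalizing a with
  | zero => exact h.symm
  | succ j ih =>
    have h' : altWalk ρ γ x (a + 1) = altWalk ρ γ x (a + 1 + 2 * j + 1) := by
      rw [show a + 2 * (j + 1) + 1 = a + 1 + 2 * j + 1 + 1 by ring] at h
      rw [altWalk, h, ← altMap_altWalk_succ hρ hγ (a + 1 + 2 * j + 1),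
        altMap_congr (by omega : a % 2 = (a + 1 + 2 * j + 1) % 2)]
    simpa only [Nat.add_right_comm _ 1 j, Nat.add_assoc] using ih h'

lemma altWalk_eq_of_eq_add_even (hρ : Involutive ρ) (hγ : Involutive γ) {a j : ℕ}
    (h : altWalk ρ γ x a = altWalk ρ γ x (a + 2 * j)) : x = altWalk ρ γ x (2 * j) := by
  induction a with
  | zero => rwa [zero_add] at h
  | succ a ih =>
    apply ih
    rw [← altMap_altWalk_succ hρ hγ a, h, altMap_congr (by omega : a % 2 = (a + 2 * j) % 2),
      Nat.add_right_comm, altMap_altWalk_succ hρ hγ]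

lemma exists_altWalk_succ_eq_of_eq (hρ : Involutive ρ) (hγ : Involutive γ) (hx : ρ x = x)
    {a b : ℕ} (hab : a < b) (h : altWalk ρ γ x a = altWalk ρ γ x b) :
    ∃ c < b, altWalk ρ γ x (c + 1) = altWalk ρ γ x c := by
  obtain ⟨j, hj | hj⟩ := Nat.even_or_odd' (b - a)
  · obtain ⟨i, rfl⟩ : ∃ i, j = i + 1 := Nat.exists_eq_add_one.2 (by omega)
    obtain rfl : b = a + 2 * (i + 1) := by omega
    refine ⟨2 * i + 1, by omega, ?_⟩
    have hx' := altWalk_eq_of_eq_add_even hρ hγ h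
    rw [← altMap_altWalk_succ hρ hγ (2 * i + 1), show 2 * i + 1 + 1 = 2 * (i + 1) by ring, ← hx',
      show altMap ρ γ (2 * i + 1) = ρ by simp [altMap], hx, hx']
  · obtain rfl : b = a + 2 * j + 1 := by omega
    exact ⟨a + j, by omega, altWalk_succ_eq_of_eq_add_odd hρ hγ h⟩

lemma altWalk_injOn (hρ : Involutive ρ) (hγ : Involutive γ) (hx : ρ x = x) {m : ℕ}
    (hmove : ∀ k < m, altWalk ρ γ x (k + 1) ≠ altWalk ρ γ x k) :
    Set.InjOn (altWalk ρ γ x) (range (m + 1)) := by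
  have key : ∀ a b, a < b → b ≤ m → altWalk ρ γ x a ≠ altWalk ρ γ x b := by
    intro a b hab hbm h
    obtain ⟨c, hcb, hc⟩ := exists_altWalk_succ_eq_of_eq hρ hγ hx hab h
    exact hmove c (by omega) hc
  intro a ha b hb h
  simp only [coe_range, Set.mem_Iio] at ha hb
  rcases lt_trichotomy a b with hab | rfl | hab
  · exact absurd h (key a b hab (by omega))
  · rfl
  · exact absurd h.symm (key b a hab (by omega))

lemma altWalk_mem {D : Finset α} (hD : ∀ y ∈ D, ρ y ∈ D ∧ γ y ∈ D) (hxD : x ∈ D) (k : ℕ) :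
    altWalk ρ γ x k ∈ D := by
  induction k with
  | zero => exact hxD
  | succ k ih =>
    rcases altMap_succ_or (ρ := ρ) (γ := γ) k with ⟨h, -⟩ | ⟨h, -⟩ <;>
      simp only [altWalk, h, hD _ ih]

lemma exists_altWalk_stop (hρ : Involutive ρ) (hγ : Involutive γ) (hx : ρ x = x)
    {D : Finset α} (hD : ∀ y ∈ D, ρ y ∈ D ∧ γ y ∈ D) (hxD : x ∈ D) :
    ∃ m, (∀ k < m, altWalk ρ γ x (k + 1) ≠ altWalk ρ γ x k) ∧
      altWalk ρ γ x (m + 1) = altWalk ρ γ x m := by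
  have hstop : ∃ c, altWalk ρ γ x (c + 1) = altWalk ρ γ x c := by
    obtain ⟨a, -, b, -, hne, h⟩ := exists_ne_map_eq_of_card_lt_of_maps_to
      (s := range (#D + 1)) (by simp) (fun k _ => altWalk_mem hD hxD k)
    rcases hne.lt_or_gt with hab | hab
    · obtain ⟨c, -, hc⟩ := exists_altWalk_succ_eq_of_eq hρ hγ hx hab h
      exact ⟨c, hc⟩
    · obtain ⟨c, -, hc⟩ := exists_altWalk_succ_eq_of_eq hρ hγ hx hab h.symm
      exact ⟨c, hc⟩
  classical
  exact ⟨Nat.find hstop, fun k hk => Nat.find_min hstop hk, Nat.find_spec hstop⟩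

end AltWalk

section AltPath

variable {α : Type*} [DecidableEq α] {ρ γ : α → α} {x : α} {m : ℕ}

def altPath (ρ γ : α → α) (x : α) (m : ℕ) : Finset α := (range (m + 1)).image (altWalk ρ γ x)

lemma altWalk_mem_altPath {k : ℕ} (hk : k ≤ m) : altWalk ρ γ x k ∈ altPath ρ γ x m :=
  mem_image_of_mem _ (mem_range.2 (by omega))

lemma altPath_closed (hρ : Involutive ρ) (hγ : Involutive γ) (hx : ρ x = x)
    (hstop : altWalk ρ γ x (m + 1) = altWalk ρ γ x m) {y : α} (hy : y ∈ altPath ρ γ x m) :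
    ρ y ∈ altPath ρ γ x m ∧ γ y ∈ altPath ρ γ x m := by
  obtain ⟨k, hk, rfl⟩ := mem_image.1 hy
  rw [mem_range] at hk
  have hfwd : altMap ρ γ k (altWalk ρ γ x k) ∈ altPath ρ γ x m := by
    rcases (Nat.lt_succ_iff.1 hk).lt_or_eq with hkm | rfl
    · exact altWalk_mem_altPath (k := k + 1) hkm
    · rw [← altWalk, hstop]; exact altWalk_mem_altPath le_rfl
  have hbwd : altMap ρ γ (k + 1) (altWalk ρ γ x k) ∈ altPath ρ γ x m := by
    rw [altMap_succ_altWalk hρ hγ hx]; exact altWalk_mem_altPath (by omega)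
  rcases altMap_succ_or (ρ := ρ) (γ := γ) k with ⟨h₀, h₁⟩ | ⟨h₀, h₁⟩
  · rw [h₀] at hfwd; rw [h₁] at hbwd; exact ⟨hbwd, hfwd⟩
  · rw [h₀] at hfwd; rw [h₁] at hbwd; exact ⟨hfwd, hbwd⟩

/-- The two ends of the path are its only fixed points, each counted once. -/
lemma card_fixed_altPath (hρ : Involutive ρ) (hγ : Involutive γ) (hx : ρ x = x)
    (hmove : ∀ k < m, altWalk ρ γ x (k + 1) ≠ altWalk ρ γ x k)
    (hstop : altWalk ρ γ x (m + 1) = altWalk ρ γ x m) :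
    #((altPath ρ γ x m).filter (fun y => ρ y = y)) +
      #((altPath ρ γ x m).filter (fun y => γ y = y)) = 2 := by
  have hinj := altWalk_injOn hρ hγ hx hmove
  have hterm : ∀ k ∈ range (m + 1),
      ((if ρ (altWalk ρ γ x k) = altWalk ρ γ x k then 1 else 0) +
        if γ (altWalk ρ γ x k) = altWalk ρ γ x k then 1 else 0) =
      (if k = m then 1 else 0) + if k = 0 then 1 else 0 := by
    intro k hk
    have hkm := mem_range.1 hk
    have hend : altMap ρ γ k (altWalk ρ γ x k) = altWalk ρ γ x k ↔ k = m := by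
      rw [← altWalk]
      refine ⟨fun h => ?_, fun h => h ▸ hstop⟩
      by_contra hne
      exact hmove k (by omega) h
    have hstart : altMap ρ γ (k + 1) (altWalk ρ γ x k) = altWalk ρ γ x k ↔ k = 0 := by
      rw [altMap_succ_altWalk hρ hγ hx, hinj.eq_iff (mem_range.2 (by omega)) hk]
      omega
    rcases altMap_succ_or (ρ := ρ) (γ := γ) k with ⟨h₀, h₁⟩ | ⟨h₀, h₁⟩ <;>
      simp only [h₀, h₁] at hend hstart <;> simp only [hend, hstart, add_comm]
  rw [card_filter, card_filter, ← sum_add_distrib, altPath, sum_image hinj, sum_congr rfl hterm,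
    sum_add_distrib, sum_ite_eq', sum_ite_eq']
  simp

def IsAltPath (ρ γ : α → α) (T : Finset α) : Prop :=
  ∃ x m, ρ x = x ∧ (∀ k < m, altWalk ρ γ x (k + 1) ≠ altWalk ρ γ x k) ∧ T = altPath ρ γ x m

lemma exists_isAltPath (hρ : Involutive ρ) (hγ : Involutive γ) (hx : ρ x = x) {D : Finset α}
    (hD : ∀ y ∈ D, ρ y ∈ D ∧ γ y ∈ D) (hxD : x ∈ D) :
    ∃ T ⊆ D, T.Nonempty ∧ (∀ y ∈ T, ρ y ∈ T ∧ γ y ∈ T) ∧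
      #(T.filter (fun y => ρ y = y)) + #(T.filter (fun y => γ y = y)) = 2 ∧ IsAltPath ρ γ T := by
  obtain ⟨m, hmove, hstop⟩ := exists_altWalk_stop hρ hγ hx hD hxD
  refine ⟨altPath ρ γ x m, ?_, ⟨x, altWalk_mem_altPath (k := 0) (Nat.zero_le m)⟩,
    fun y hy => altPath_closed hρ hγ hx hstop hy, card_fixed_altPath hρ hγ hx hmove hstop,
    x, m, hx, hmove, rfl⟩
  intro y hy
  obtain ⟨k, -, rfl⟩ := mem_image.1 hy
  exact altWalk_mem hD hxD k

end AltPath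

lemma card_filter_eq_add_card_filter_sdiff {α : Type*} [DecidableEq α] {T D : Finset α}
    (hTD : T ⊆ D) (p : α → Prop) [DecidablePred p] :
    #(D.filter p) = #(T.filter p) + #((D \ T).filter p) := by
  rw [← card_union_of_disjoint (disjoint_filter_filter disjoint_sdiff), ← filter_union,
    union_sdiff_of_subset hTD]

theorem exists_finpartition_isAltPath {α : Type*} [DecidableEq α] {ρ γ : α → α}
    (hρ : Involutive ρ) (hγ : Involutive γ) (D : Finset α) (hD : ∀ y ∈ D, ρ y ∈ D ∧ γ y ∈ D)
    (hcyc : ∀ C ⊆ D, C.Nonempty → (∀ y ∈ C, ρ y ∈ C ∧ γ y ∈ C) → ∃ y ∈ C, ρ y = y ∨ γ y = y) :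
    ∃ P : Finpartition D, (∀ T ∈ P.parts, IsAltPath ρ γ T ∨ IsAltPath γ ρ T) ∧
      2 * #P.parts = #(D.filter (fun y => ρ y = y)) + #(D.filter (fun y => γ y = y)) := by
  induction D using Finset.strongInduction with
  | H D ih =>
  rcases D.eq_empty_or_nonempty with rfl | hne
  · exact ⟨Finpartition.empty _, by simp, by simp⟩
  obtain ⟨T, hTD, hTne, hTcl, hTcard, hT⟩ :
      ∃ T ⊆ D, T.Nonempty ∧ (∀ y ∈ T, ρ y ∈ T ∧ γ y ∈ T) ∧
        #(T.filter (fun y => ρ y = y)) + #(T.filter (fun y => γ y = y)) = 2 ∧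
        (IsAltPath ρ γ T ∨ IsAltPath γ ρ T) := by
    obtain ⟨x, hxD, hx | hx⟩ := hcyc D subset_rfl hne hD
    · obtain ⟨T, hTD, hTne, hTcl, hTcard, hT⟩ := exists_isAltPath hρ hγ hx hD hxD
      exact ⟨T, hTD, hTne, hTcl, hTcard, .inl hT⟩
    · obtain ⟨T, hTD, hTne, hTcl, hTcard, hT⟩ :=
        exists_isAltPath hγ hρ hx (fun y hy => (hD y hy).symm) hxD
      exact ⟨T, hTD, hTne, fun y hy => (hTcl y hy).symm, by omega, .inr hT⟩
  have hrest : ∀ y ∈ D \ T, ρ y ∈ D \ T ∧ γ y ∈ D \ T := by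
    intro y hy
    simp only [mem_sdiff] at hy ⊢
    refine ⟨⟨(hD y hy.1).1, fun h => hy.2 ?_⟩, ⟨(hD y hy.1).2, fun h => hy.2 ?_⟩⟩
    · simpa only [hρ y] using (hTcl _ h).1
    · simpa only [hγ y] using (hTcl _ h).2
  obtain ⟨P, hP, hPcard⟩ := ih (D \ T) (sdiff_ssubset hTD hTne) hrest
    (fun C hC => hcyc C (hC.trans sdiff_subset))
  refine ⟨P.extend hTne.ne_empty disjoint_sdiff_self_left (sdiff_union_of_subset hTD), ?_, ?_⟩
  · intro T' hT'
    rw [Finpartition.extend_parts, mem_insert] at hT'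
    rcases hT' with rfl | hT'
    · exact hT
    · exact hP T' hT'
  · rw [Finpartition.card_extend, card_filter_eq_add_card_filter_sdiff hTD,
      card_filter_eq_add_card_filter_sdiff hTD]
    omega

/-- A matching of `A` with `B` inside lines, the lines being the fibres of `key`. -/
structure IsLineMatching {α β : Type*} (key : α → β) (A B : Finset α) (ρ : α → α) : Prop where
  involutive : Involutive ρ
  key_eq : ∀ x, key (ρ x) = key x
  mem_of_ne : ∀ x, ρ x ≠ x → x ∈ A ∧ ρ x ∈ B ∨ x ∈ B ∧ ρ x ∈ A

namespace IsLineMatching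

variable {α β : Type*} {key : α → β} {A B : Finset α} {ρ : α → α}

lemma eq_of_notMem [DecidableEq α] (h : IsLineMatching key A B ρ) {x : α} (hx : x ∉ A ∪ B) :
    ρ x = x := by
  by_contra hne
  rcases h.mem_of_ne x hne with ⟨h', -⟩ | ⟨h', -⟩ <;> simp [h'] at hx

lemma mem_union [DecidableEq α] (h : IsLineMatching key A B ρ) {x : α} (hx : x ∈ A ∪ B) :
    ρ x ∈ A ∪ B := by
  by_cases hfix : ρ x = x
  · rwa [hfix]
  · rcases h.mem_of_ne x hfix with ⟨-, h'⟩ | ⟨-, h'⟩ <;> simp [h']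

lemma extend [DecidableEq α] (h : IsLineMatching key A B ρ) {a b : α} (ha : a ∉ A ∪ B)
    (hb : b ∉ A ∪ B) (hab : a ≠ b) (hkey : key a = key b) :
    IsLineMatching key (insert a A) (insert b B)
      (fun x => if x = a then b else if x = b then a else ρ x) := by
  have hfa := h.eq_of_notMem ha
  have hfb := h.eq_of_notMem hb
  have hρx : ∀ x, x ≠ a → x ≠ b → ρ x ≠ a ∧ ρ x ≠ b := fun x hxa hxb =>
    ⟨fun hx => hxa (by rw [← h.involutive x, hx, hfa]),
      fun hx => hxb (by rw [← h.involutive x, hx, hfb])⟩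
  refine ⟨fun x => ?_, fun x => ?_, fun x hx => ?_⟩
  · by_cases hxa : x = a
    · simp [hxa, hab.symm]
    by_cases hxb : x = b
    · simp [hxb, hab.symm]
    simp [hxa, hxb, hρx x hxa hxb, h.involutive x]
  · by_cases hxa : x = a
    · simp [hxa, hkey]
    by_cases hxb : x = b
    · simp [hxb, hab.symm, hkey]
    simp [hxa, hxb, h.key_eq]
  · by_cases hxa : x = a
    · simp [hxa]
    by_cases hxb : x = b
    · simp [hxb]
    simp only [hxa, hxb, if_false] at hx ⊢
    rcases h.mem_of_ne x hx with h' | h' <;> simp [h']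

end IsLineMatching

lemma card_filter_union_of_forall_ne {α β : Type*} [DecidableEq α] [DecidableEq β] {key : α → β}
    {A B : Finset α} (hAB : Disjoint A B) (hAB' : ∀ a ∈ A, ∀ b ∈ B, key a ≠ key b) (i : β) :
    (#((A ∪ B).filter (fun x => key x = i)) : ℤ) =
      |(#(A.filter (fun x => key x = i)) : ℤ) - #(B.filter (fun x => key x = i))| := by
  rw [filter_union, card_union_of_disjoint (disjoint_filter_filter hAB)]
  rcases (A.filter (fun x => key x = i)).eq_empty_or_nonempty with hA | ⟨a, ha⟩
  · simp [hA]
  · rw [mem_filter] at ha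
    have hB : B.filter (fun x => key x = i) = ∅ :=
      filter_eq_empty_iff.2 fun b hb hbi => hAB' a ha.1 b hb (ha.2.trans hbi.symm)
    simp [hB]

/-- Greedy matching: pair two points of `A` and `B` on a common line while there are any. -/
theorem exists_isLineMatching {α β : Type*} [DecidableEq α] [DecidableEq β] (key : α → β)
    {A B : Finset α} (hAB : Disjoint A B) :
    ∃ ρ, IsLineMatching key A B ρ ∧ ∀ i,
      (#((A ∪ B).filter (fun x => key x = i ∧ ρ x = x)) : ℤ) =
        |(#(A.filter (fun x => key x = i)) : ℤ) - #(B.filter (fun x => key x = i))| := by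
  induction A using Finset.strongInduction generalizing B with
  | H A ih =>
  by_cases hpair : ∃ a ∈ A, ∃ b ∈ B, key a = key b
  · obtain ⟨a, ha, b, hb, hkey⟩ := hpair
    have hab : a ≠ b := fun h => disjoint_left.1 hAB ha (h ▸ hb)
    obtain ⟨ρ, hρ, hcount⟩ := ih (A.erase a) (erase_ssubset ha)
      (disjoint_of_subset_left (erase_subset a A) (disjoint_of_subset_right (erase_subset b B) hAB))
    have ha' : a ∉ A.erase a ∪ B.erase b := by
      simp [disjoint_left.1 hAB ha]
    have hb' : b ∉ A.erase a ∪ B.erase b := by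
      have hbA : b ∉ A := fun h => disjoint_left.1 hAB h hb
      simp [hbA]
    refine ⟨_, by simpa [insert_erase ha, insert_erase hb] using hρ.extend ha' hb' hab hkey,
      fun i => ?_⟩
    have hfix : (A ∪ B).filter (fun x => key x = i ∧
          (if x = a then b else if x = b then a else ρ x) = x) =
        (A.erase a ∪ B.erase b).filter (fun x => key x = i ∧ ρ x = x) := by
      ext x
      by_cases hxa : x = a
      · subst hxa; simp [hab.symm, ha']
      by_cases hxb : x = b
      · subst hxb; simp [hxa, hab, hb']
      simp [hxa, hxb]
    rw [hfix, hcount i, filter_erase, filter_erase]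
    by_cases hi : key a = i
    · rw [← card_erase_add_one (mem_filter.2 ⟨ha, hi⟩),
        ← card_erase_add_one (mem_filter.2 ⟨hb, hkey ▸ hi⟩)]
      push_cast
      ring_nf
    · rw [erase_eq_of_notMem (s := A.filter fun x => key x = i) fun h => hi (mem_filter.1 h).2,
        erase_eq_of_notMem (s := B.filter fun x => key x = i)
          fun h => hi (hkey.trans (mem_filter.1 h).2)]
  · push Not at hpair
    refine ⟨id, ⟨fun _ => rfl, fun _ => rfl, fun x h => (h rfl).elim⟩, fun i => ?_⟩
    simpa only [id, and_true] using card_filter_union_of_forall_ne hAB hpair i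

lemma finsum_card_filter_eq {α β : Type*} [DecidableEq β] (s : Finset α) (f : α → β) :
    ∑ᶠ i, (#(s.filter (fun x => f x = i)) : ℤ) = #s := by
  rw [finsum_eq_sum_of_support_subset _ (s := s.image f), card_eq_sum_card_image f s]
  · push_cast; rfl
  · intro i hi
    obtain ⟨x, hx⟩ := card_ne_zero.1 (Nat.cast_ne_zero.1 hi)
    rw [mem_filter] at hx
    simpa [← hx.2] using mem_image_of_mem f hx.1

lemma card_sub_card_eq_card_sdiff_sub_card_sdiff {α : Type*} [DecidableEq α] (s t : Finset α) :
    (#s : ℤ) - #t = #(s \ t) - #(t \ s) := by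
  have hs := card_sdiff_add_card_inter s t
  have ht := card_sdiff_add_card_inter t s
  rw [inter_comm] at ht
  omega

lemma finsum_abs_sub_card_filter_eq {α β : Type*} [DecidableEq α] [DecidableEq β] {key : α → β}
    {F1 F2 : Finset α} {ρ : α → α}
    (hcount : ∀ i, (#((F1 \ F2 ∪ F2 \ F1).filter (fun x => key x = i ∧ ρ x = x)) : ℤ) =
      |(#((F1 \ F2).filter (fun x => key x = i)) : ℤ) - #((F2 \ F1).filter (fun x => key x = i))|) :
    ∑ᶠ i, |(#(F1.filter (fun x => key x = i)) : ℤ) - #(F2.filter (fun x => key x = i))| =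
      #((F1 \ F2 ∪ F2 \ F1).filter (fun x => ρ x = x)) := by
  have hsdiff : ∀ s t : Finset α, ∀ i, (s \ t).filter (fun x => key x = i) =
      s.filter (fun x => key x = i) \ t.filter (fun x => key x = i) := by
    intro s t i; ext; simp only [mem_filter, mem_sdiff]; tauto
  rw [← finsum_card_filter_eq _ key]
  refine finsum_congr fun i => ?_
  rw [card_sub_card_eq_card_sdiff_sub_card_sdiff, ← hsdiff, ← hsdiff, ← hcount, filter_filter]
  simp only [and_comm]

lemma lineError_eq_card_fixed {F1 F2 : Finset (ℤ × ℤ)} {ρ γ : ℤ × ℤ → ℤ × ℤ}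
    (hρ : ∀ i, (#((F1 \ F2 ∪ F2 \ F1).filter (fun x => x.1 = i ∧ ρ x = x)) : ℤ) =
      |(#((F1 \ F2).filter (fun x => x.1 = i)) : ℤ) - #((F2 \ F1).filter (fun x => x.1 = i))|)
    (hγ : ∀ j, (#((F1 \ F2 ∪ F2 \ F1).filter (fun x => x.2 = j ∧ γ x = x)) : ℤ) =
      |(#((F1 \ F2).filter (fun x => x.2 = j)) : ℤ) - #((F2 \ F1).filter (fun x => x.2 = j))|) :
    lineError F1 F2 = #((F1 \ F2 ∪ F2 \ F1).filter (fun x => ρ x = x)) +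
      #((F1 \ F2 ∪ F2 \ F1).filter (fun x => γ x = x)) :=
  congrArg₂ (· + ·) (finsum_abs_sub_card_filter_eq hρ) (finsum_abs_sub_card_filter_eq hγ)

/-- `ρ` matches the points removed from `F1` with the points added to it, line by line. -/
lemma IsLineMatching.card_filter_symmDiff {α β : Type*} [DecidableEq α] [DecidableEq β]
    {key : α → β} {F1 F2 C : Finset α} {ρ : α → α}
    (hρ : IsLineMatching key (F1 \ F2) (F2 \ F1) ρ) (hC : ∀ x ∈ C, ρ x ∈ C ∧ ρ x ≠ x) (i : β) :
    #((symmDiff F1 C).filter (fun x => key x = i)) = #(F1.filter (fun x => key x = i)) := by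
  have hswap : ∀ x ∈ C, ρ x ∈ F1 ↔ x ∉ F1 := by
    intro x hx
    rcases hρ.mem_of_ne x (hC x hx).2 with ⟨h₁, h₂⟩ | ⟨h₁, h₂⟩ <;>
      simp only [mem_sdiff] at h₁ h₂ <;> tauto
  have hbij :
      #((C \ F1).filter (fun x => key x = i)) = #((F1 ∩ C).filter (fun x => key x = i)) := by
    refine card_nbij' ρ ρ (fun x hx => ?_) (fun x hx => ?_) (fun x _ => hρ.involutive x)
      (fun x _ => hρ.involutive x)
    · simp only [coe_filter, mem_sdiff, mem_inter, Set.mem_ofPred_eq] at hx ⊢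
      exact ⟨⟨(hswap x hx.1.1).2 hx.1.2, (hC x hx.1.1).1⟩, (hρ.key_eq x).trans hx.2⟩
    · simp only [coe_filter, mem_sdiff, mem_inter, Set.mem_ofPred_eq] at hx ⊢
      exact ⟨⟨(hC x hx.1.2).1, fun h => (hswap x hx.1.2).1 h hx.1.1⟩,
        (hρ.key_eq x).trans hx.2⟩
  have hsymm : #((symmDiff F1 C).filter (fun x => key x = i)) =
      #((F1 \ C).filter (fun x => key x = i)) + #((C \ F1).filter (fun x => key x = i)) := by
    rw [symmDiff_def, sup_eq_union, filter_union,
      card_union_of_disjoint (disjoint_filter_filter disjoint_sdiff_sdiff)]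
  have hF1 : #(F1.filter (fun x => key x = i)) =
      #((F1 \ C).filter (fun x => key x = i)) + #((F1 ∩ C).filter (fun x => key x = i)) := by
    rw [← card_union_of_disjoint (disjoint_filter_filter (disjoint_sdiff_inter F1 C)),
      ← filter_union, sdiff_union_inter]
  omega

lemma UniquelyDetermined.exists_fixed {F1 F2 C : Finset (ℤ × ℤ)} {ρ γ : ℤ × ℤ → ℤ × ℤ}
    (hU : UniquelyDetermined F1) (hρ : IsLineMatching Prod.fst (F1 \ F2) (F2 \ F1) ρ)
    (hγ : IsLineMatching Prod.snd (F1 \ F2) (F2 \ F1) γ) (hne : C.Nonempty)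
    (hC : ∀ y ∈ C, ρ y ∈ C ∧ γ y ∈ C) : ∃ y ∈ C, ρ y = y ∨ γ y = y := by
  by_contra! hfree
  have hsame := hU (symmDiff F1 C)
    (hρ.card_filter_symmDiff fun x hx => ⟨(hC x hx).1, (hfree x hx).1⟩)
    (hγ.card_filter_symmDiff fun x hx => ⟨(hC x hx).2, (hfree x hx).2⟩)
  exact hne.ne_empty (symmDiff_eq_left.1 hsame)

section Staircase

variable {f g : ℤ × ℤ → ℤ × ℤ} {x : ℤ × ℤ}

lemma altWalk_odd_step {kf : ℤ × ℤ → ℤ} (hf : ∀ y, kf (f y) = kf y) (i : ℕ) :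
    kf (altWalk f g x (2 * i + 2)) = kf (altWalk f g x (2 * i + 1)) := by
  have h : altMap f g (2 * i + 1) = f := by simp [altMap, Nat.add_mod]
  rw [altWalk, h, hf]

lemma altWalk_even_step {kg : ℤ × ℤ → ℤ} (hg : ∀ y, kg (g y) = kg y) (i : ℕ) :
    kg (altWalk f g x (2 * i + 1)) = kg (altWalk f g x (2 * i)) := by
  have h : altMap f g (2 * i) = g := by simp [altMap]
  rw [altWalk, h, hg]

lemma isStaircaseSet_altPath {F1 F2 : Finset (ℤ × ℤ)} {kf kg : ℤ × ℤ → ℤ}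
    (hf : IsLineMatching kf (F1 \ F2) (F2 \ F1) f) (hg : IsLineMatching kg (F1 \ F2) (F2 \ F1) g)
    (hphase : kf = Prod.snd ∧ kg = Prod.fst ∨ kf = Prod.fst ∧ kg = Prod.snd) {m : ℕ}
    (hx : f x = x) (hmove : ∀ k < m, altWalk f g x (k + 1) ≠ altWalk f g x k)
    (hD : altPath f g x m ⊆ F1 \ F2 ∪ F2 \ F1) :
    IsStaircaseSet F1 F2 (altPath f g x m) := by
  have hinj := altWalk_injOn hf.involutive hg.involutive hx hmove
  have hodd : ∀ i, 1 ≤ i → 2 * i + 1 ≤ m + 1 →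
      kf (altWalk f g x (2 * i - 1)) = kf (altWalk f g x (2 * i + 1 - 1)) := by
    intro i hi _
    obtain ⟨j, rfl⟩ := Nat.exists_eq_add_of_le' hi
    exact (altWalk_odd_step hf.key_eq j).symm
  have heven : ∀ i, 2 * i + 2 ≤ m + 1 →
      kg (altWalk f g x (2 * i + 1 - 1)) = kg (altWalk f g x (2 * i + 2 - 1)) :=
    fun i _ => (altWalk_even_step hg.key_eq i).symm
  refine ⟨m + 1, fun i => altWalk f g x (i - 1), by omega, fun i j hi hin hj hjn h => ?_,
    ?_, fun i hi hin => hD (altWalk_mem_altPath (by omega)), fun i hi hin => ?_, ?_⟩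
  · have := hinj (mem_range.2 (by omega)) (mem_range.2 (by omega)) h
    omega
  · ext y
    simp only [altPath, mem_image, mem_range, mem_Icc]
    constructor
    · rintro ⟨k, hk, rfl⟩
      exact ⟨k + 1, by omega, rfl⟩
    · rintro ⟨k, hk, rfl⟩
      exact ⟨k - 1, by omega, rfl⟩
  · obtain ⟨k, rfl⟩ := Nat.exists_eq_add_of_le' hi
    have hstep := hmove k (by omega)
    simp only [add_tsub_cancel_right]
    rcases altMap_succ_or (ρ := f) (γ := g) k with ⟨h, -⟩ | ⟨h, -⟩
    · rw [altWalk, h] at hstep ⊢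
      exact hg.mem_of_ne _ hstep
    · rw [altWalk, h] at hstep ⊢
      exact hf.mem_of_ne _ hstep
  · rcases hphase with ⟨rfl, rfl⟩ | ⟨rfl, rfl⟩
    exacts [.inl ⟨hodd, heven⟩, .inr ⟨hodd, heven⟩]

lemma isStaircaseSet_of_isAltPath {F1 F2 T : Finset (ℤ × ℤ)} {ρ γ : ℤ × ℤ → ℤ × ℤ}
    (hρ : IsLineMatching Prod.fst (F1 \ F2) (F2 \ F1) ρ)
    (hγ : IsLineMatching Prod.snd (F1 \ F2) (F2 \ F1) γ) (hD : T ⊆ F1 \ F2 ∪ F2 \ F1)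
    (hT : IsAltPath ρ γ T ∨ IsAltPath γ ρ T) : IsStaircaseSet F1 F2 T := by
  rcases hT with ⟨x, m, hx, hmove, rfl⟩ | ⟨x, m, hx, hmove, rfl⟩
  · exact isStaircaseSet_altPath hρ hγ (.inr ⟨rfl, rfl⟩) hx hmove hD
  · exact isStaircaseSet_altPath hγ hρ (.inl ⟨rfl, rfl⟩) hx hmove hD

end Staircase

theorem symmDiff_partition_into_staircases_general
    (F1 F2 : Finset (ℤ × ℤ))
    (hU : UniquelyDetermined F1)
    (α : ℕ)
    (herr : lineError F1 F2 = 2 * α) :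
    ∃ T : Fin α → Finset (ℤ × ℤ),
      (∀ k, IsStaircaseSet F1 F2 (T k)) ∧
      (∀ k l, k ≠ l → Disjoint (T k) (T l)) ∧
      Finset.univ.biUnion T = (F1 \ F2) ∪ (F2 \ F1) := by
  have hAB : Disjoint (F1 \ F2) (F2 \ F1) := disjoint_sdiff_sdiff
  obtain ⟨ρ, hρ, hρcount⟩ := exists_isLineMatching Prod.fst hAB
  obtain ⟨γ, hγ, hγcount⟩ := exists_isLineMatching Prod.snd hAB
  obtain ⟨P, hP, hPcard⟩ := exists_finpartition_isAltPath hρ.involutive hγ.involutive _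
    (fun y hy => ⟨hρ.mem_union hy, hγ.mem_union hy⟩)
    (fun C _ hne hC => hU.exists_fixed hρ hγ hne hC)
  have hparts : #P.parts = α := by
    have := lineError_eq_card_fixed hρcount hγcount
    omega
  let e := (P.parts.equivFinOfCardEq hparts).symm
  refine ⟨fun k => e k, fun k => isStaircaseSet_of_isAltPath hρ hγ (P.le (e k).2) (hP _ (e k).2),
    fun k l hkl => P.disjoint (e k).2 (e l).2 (Subtype.val_injective.ne (e.injective.ne hkl)), ?_⟩
  refine Eq.trans ?_ P.biUnion_parts
  ext y
  simp only [mem_biUnion, mem_univ, true_and, id]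
  exact ⟨fun ⟨k, hk⟩ => ⟨_, (e k).2, hk⟩, fun ⟨T, hT, hy⟩ => ⟨e.symm ⟨T, hT⟩, by simpa using hy⟩⟩

theorem symmDiff_partition_into_staircases
    (F1 F2 : Finset (ℤ × ℤ))
    (hU : UniquelyDetermined F1)
    (hcard : F1.card = F2.card)
    (α : ℕ) (hα : 0 < α)
    (herr : lineError F1 F2 = 2 * α) :
    ∃ T : Fin α → Finset (ℤ × ℤ),
      (∀ k, IsStaircaseSet F1 F2 (T k)) ∧
      (∀ k l, k ≠ l → Disjoint (T k) (T l)) ∧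
      Finset.univ.biUnion T = (F1 \ F2) ∪ (F2 \ F1) :=
  symmDiff_partition_into_staircases_general F1 F2 hU α herr
end

section
/- Let F1 and F2 be finite subsets of ℤ² such that F1 is uniquely determined by its row and column sums, |F1| = |F2|, F1 ∩ F2 = ∅, and the error in the line sums equals 2α for a positive integer α. Then |F1| ≤ Σ_{i=1}^{α} ⌊α/i⌋. -/
/-!
A uniquely determined set `F` admits no switching component, so its rows are nested: a row
with fewer points has its points in columns occupied by every row with more points. Fix `j`,
let `R` be the set of rows with at least `j` points and `C` the set of columns occupied by a
row of `R` with fewest points. Then `R × C ⊆ F`, and every point of `F` lies in a row of `R` or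
a column of `C`. Counting line sums over `R` and `C` shows that `F` beats the disjoint set `G`
by at least `|R| |C|`, while a deficit of `G` on some lines must be compensated elsewhere
since `|F| = |G|`; hence `2 j |R| ≤ 2 |R| |C| ≤ 2α`. Summing `|R| ≤ α / j` over `j` counts
`|F|` row by row.
-/

open Finset Function

lemma Finset.two_nsmul_sum_le_sum_abs {ι M : Type*} [AddCommGroup M] [LinearOrder M]
    [IsOrderedAddMonoid M] {f : ι → M} {s t : Finset ι} (hst : s ⊆ t)
    (ht : ∑ i ∈ t, f i = 0) :
    2 • ∑ i ∈ s, f i ≤ ∑ i ∈ t, |f i| := by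
  classical
  have hsplit : ∑ i ∈ t \ s, f i + ∑ i ∈ s, f i = 0 := by rw [sum_sdiff hst, ht]
  calc 2 • ∑ i ∈ s, f i = ∑ i ∈ t \ s, -f i + ∑ i ∈ s, f i := by
        rw [sum_neg_distrib, neg_eq_of_add_eq_zero_right hsplit, two_nsmul]
    _ ≤ ∑ i ∈ t \ s, |f i| + ∑ i ∈ s, |f i| :=
        add_le_add (sum_le_sum fun i _ => neg_le_abs _) (sum_le_sum fun i _ => le_abs_self _)
    _ = ∑ i ∈ t, |f i| := sum_sdiff hst

lemma two_mul_sum_card_fiber_sub_le_finsum_abs {α β : Type*} [DecidableEq β] (π : α → β)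
    {F G : Finset α} (hcard : #F = #G) (R : Finset β) :
    2 * ∑ b ∈ R, ((#{a ∈ F | π a = b} : ℤ) - #{a ∈ G | π a = b}) ≤
      ∑ᶠ b, |(#{a ∈ F | π a = b} : ℤ) - #{a ∈ G | π a = b}| := by
  classical
  set t := (F ∪ G).image π ∪ R
  have hmaps : ∀ H ⊆ F ∪ G, (H : Set α).MapsTo π t := fun H hH a ha =>
    mem_union_left _ (mem_image_of_mem π (hH ha))
  have hfiber : ∀ H ⊆ F ∪ G, ∀ b ∉ t, #{a ∈ H | π a = b} = 0 := fun H hH b hb =>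
    card_eq_zero.2 (filter_eq_empty_iff.2 fun a ha hab => hb (hab ▸ hmaps H hH ha))
  have hsupp : support (fun b => |(#{a ∈ F | π a = b} : ℤ) - #{a ∈ G | π a = b}|) ⊆ t := by
    intro b hb
    by_contra hbt
    simp [hfiber F subset_union_left b hbt, hfiber G subset_union_right b hbt] at hb
  have htotal : ∀ H ⊆ F ∪ G, ∑ b ∈ t, (#{a ∈ H | π a = b} : ℤ) = #H := fun H hH => by
    rw [card_eq_sum_card_fiberwise (hmaps H hH), Nat.cast_sum]
  rw [finsum_eq_sum_of_support_subset _ hsupp, two_mul, ← two_nsmul]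
  refine two_nsmul_sum_le_sum_abs subset_union_right ?_
  rw [sum_sub_distrib, htotal F subset_union_left, htotal G subset_union_right, hcard, sub_self]

lemma lineError_nonneg (F G : Finset (ℤ × ℤ)) : 0 ≤ lineError F G :=
  add_nonneg (finsum_nonneg fun _ => abs_nonneg _) (finsum_nonneg fun _ => abs_nonneg _)

lemma sum_rowSum_add_sum_colSum (F : Finset (ℤ × ℤ)) (R C : Finset ℤ) :
    ∑ i ∈ R, rowSum F i + ∑ j ∈ C, colSum F j =
      #{p ∈ F | p.1 ∈ R ∨ p.2 ∈ C} + #(F ∩ R ×ˢ C) := by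
  have hinter : F ∩ R ×ˢ C = {p ∈ F | p.1 ∈ R} ∩ {p ∈ F | p.2 ∈ C} := by
    ext p
    simp only [mem_inter, mem_product, mem_filter]
    tauto
  rw [hinter, filter_or, card_union_add_card_inter]
  exact congrArg₂ (· + ·) (sum_card_fiberwise_eq_card_filter _ _ _)
    (sum_card_fiberwise_eq_card_filter _ _ _)

lemma two_mul_card_mul_card_le_lineError {F G : Finset (ℤ × ℤ)} (hcard : #F = #G)
    (hdisj : F ∩ G = ∅) {R C : Finset ℤ} (hRC : R ×ˢ C ⊆ F)
    (hcover : ∀ p ∈ F, p.1 ∈ R ∨ p.2 ∈ C) :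
    2 * ((#R * #C : ℕ) : ℤ) ≤ lineError F G := by
  have hF : ∑ i ∈ R, rowSum F i + ∑ j ∈ C, colSum F j = #F + #R * #C := by
    rw [sum_rowSum_add_sum_colSum, filter_true_of_mem hcover, inter_eq_right.2 hRC,
      card_product]
  have hG : ∑ i ∈ R, rowSum G i + ∑ j ∈ C, colSum G j ≤ #G := by
    have hempty : G ∩ R ×ˢ C = ∅ := by
      rw [eq_empty_iff_forall_notMem]
      intro p hp
      rw [mem_inter] at hp
      simpa [hdisj] using mem_inter.2 ⟨hRC hp.2, hp.1⟩
    rw [sum_rowSum_add_sum_colSum, hempty, card_empty, add_zero]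
    exact card_filter_le _ _
  have hrows := two_mul_sum_card_fiber_sub_le_finsum_abs Prod.fst hcard R
  have hcols := two_mul_sum_card_fiber_sub_le_finsum_abs Prod.snd hcard C
  simp only [sum_sub_distrib] at hrows hcols
  unfold lineError rowSum colSum at *
  zify at hF hG hcard
  push_cast
  linarith

def rowSupp (F : Finset (ℤ × ℤ)) (x : ℤ) : Finset ℤ :=
  (F.filter (fun p => p.1 = x)).image Prod.snd

@[simp]
lemma mem_rowSupp {F : Finset (ℤ × ℤ)} {x y : ℤ} : y ∈ rowSupp F x ↔ (x, y) ∈ F := by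
  simp only [rowSupp, mem_image, mem_filter]
  constructor
  · rintro ⟨⟨x', y'⟩, ⟨hp, rfl⟩, rfl⟩
    exact hp
  · exact fun h => ⟨(x, y), ⟨h, rfl⟩, rfl⟩

lemma card_rowSupp (F : Finset (ℤ × ℤ)) (x : ℤ) : #(rowSupp F x) = rowSum F x :=
  card_image_of_injOn fun _ hp _ hq h =>
    Prod.ext ((mem_filter.1 hp).2.trans (mem_filter.1 hq).2.symm) h

lemma Finset.card_filter_sdiff_union {α : Type*} [DecidableEq α] {F A B : Finset α} (hA : A ⊆ F)
    (hB : Disjoint B F) (P : α → Prop) [DecidablePred P] :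
    #{p ∈ F \ A ∪ B | P p} + #{p ∈ A | P p} = #{p ∈ F | P p} + #{p ∈ B | P p} := by
  have hdisj : Disjoint {p ∈ F \ A | P p} {p ∈ B | P p} :=
    disjoint_filter_filter (hB.mono_right sdiff_subset).symm
  have hF : #{p ∈ F | P p} = #{p ∈ F \ A | P p} + #{p ∈ A | P p} := by
    rw [← card_union_of_disjoint (disjoint_filter_filter sdiff_disjoint), ← filter_union,
      sdiff_union_of_subset hA]
  rw [filter_union, card_union_of_disjoint hdisj, hF]
  omega

namespace UniquelyDetermined

variable {F : Finset (ℤ × ℤ)}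

/-- Exchanging the corners of a switching component `{(x, y), (x', y')}` ↔ `{(x, y'), (x', y)}`
preserves all line sums. -/
lemma not_switching (hU : UniquelyDetermined F) {x x' y y' : ℤ} (h₁ : (x, y) ∈ F)
    (h₂ : (x', y') ∈ F) (h₃ : (x, y') ∉ F) (h₄ : (x', y) ∉ F) : False := by
  have hx : x ≠ x' := by rintro rfl; exact h₃ h₂
  have hy : y ≠ y' := by rintro rfl; exact h₄ h₂
  set A : Finset (ℤ × ℤ) := {(x, y), (x', y')}
  set B : Finset (ℤ × ℤ) := {(x, y'), (x', y)}
  have hA : A ⊆ F := by simp [A, insert_subset_iff, h₁, h₂]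
  have hB : Disjoint B F := by simp [B, h₃, h₄]
  have hrows : ∀ i, rowSum (F \ A ∪ B) i = rowSum F i := fun i => by
    have hAB : #{p ∈ A | p.1 = i} = #{p ∈ B | p.1 = i} := by
      simp only [A, B, filter_insert, filter_singleton]
      split_ifs <;> simp_all
    have := card_filter_sdiff_union hA hB (fun p => p.1 = i)
    unfold rowSum
    omega
  have hcols : ∀ j, colSum (F \ A ∪ B) j = colSum F j := fun j => by
    have hAB : #{p ∈ A | p.2 = j} = #{p ∈ B | p.2 = j} := by
      simp only [A, B, filter_insert, filter_singleton]
      split_ifs <;> simp_all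
    have := card_filter_sdiff_union hA hB (fun p => p.2 = j)
    unfold colSum
    omega
  have hmem : (x, y') ∈ F \ A ∪ B := mem_union_right _ (by simp [B])
  exact h₃ (hU _ hrows hcols ▸ hmem)

lemma rowSupp_subset_or_subset (hU : UniquelyDetermined F) (x x' : ℤ) :
    rowSupp F x ⊆ rowSupp F x' ∨ rowSupp F x' ⊆ rowSupp F x := by
  by_contra! h
  obtain ⟨y, hy, hy'⟩ := not_subset.1 h.1
  obtain ⟨y', hy'', hy'''⟩ := not_subset.1 h.2
  exact hU.not_switching (mem_rowSupp.1 hy) (mem_rowSupp.1 hy'')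
    (mem_rowSupp.not.1 hy''') (mem_rowSupp.not.1 hy')

lemma rowSupp_subset_of_rowSum_le (hU : UniquelyDetermined F) {x x' : ℤ}
    (h : rowSum F x ≤ rowSum F x') : rowSupp F x ⊆ rowSupp F x' := by
  rcases hU.rowSupp_subset_or_subset x x' with hsub | hsub
  · exact hsub
  · rw [eq_of_subset_of_card_le hsub (by rwa [card_rowSupp, card_rowSupp])]

lemma two_mul_mul_card_rows_le_lineError (hU : UniquelyDetermined F) {G : Finset (ℤ × ℤ)}
    (hcard : #F = #G) (hdisj : F ∩ G = ∅) (j : ℕ) :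
    2 * ((j * #{x ∈ F.image Prod.fst | j ≤ rowSum F x} : ℕ) : ℤ) ≤ lineError F G := by
  set R := {x ∈ F.image Prod.fst | j ≤ rowSum F x}
  rcases R.eq_empty_or_nonempty with hR | hR
  · simpa [hR] using lineError_nonneg F G
  obtain ⟨x₀, hx₀, hmin⟩ := R.exists_min_image (rowSum F) hR
  have hj : j ≤ rowSum F x₀ := (mem_filter.1 hx₀).2
  have hRC : R ×ˢ rowSupp F x₀ ⊆ F := by
    rintro ⟨x, y⟩ hp
    rw [mem_product] at hp
    exact mem_rowSupp.1 (hU.rowSupp_subset_of_rowSum_le (hmin x hp.1) hp.2)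
  have hcover : ∀ p ∈ F, p.1 ∈ R ∨ p.2 ∈ rowSupp F x₀ := by
    intro p hp
    by_cases hjp : j ≤ rowSum F p.1
    · exact Or.inl (mem_filter.2 ⟨mem_image_of_mem _ hp, hjp⟩)
    · exact Or.inr (hU.rowSupp_subset_of_rowSum_le (by omega) (mem_rowSupp.2 hp))
  calc 2 * ((j * #R : ℕ) : ℤ) ≤ 2 * ((#R * #(rowSupp F x₀) : ℕ) : ℤ) := by
        rw [card_rowSupp, mul_comm j]
        gcongr
    _ ≤ lineError F G := two_mul_card_mul_card_le_lineError hcard hdisj hRC hcover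

end UniquelyDetermined

lemma Finset.sum_eq_sum_Icc_card_filter_le {ι : Type*} (s : Finset ι) (f : ι → ℕ) {n : ℕ}
    (hf : ∀ i ∈ s, f i ≤ n) : ∑ i ∈ s, f i = ∑ j ∈ Icc 1 n, #{i ∈ s | j ≤ f i} := by
  have hrow : ∀ i ∈ s, (Icc 1 n).bipartiteAbove (fun i j => j ≤ f i) i = Icc 1 (f i) :=
    fun i hi => by
      ext j
      simp only [mem_bipartiteAbove, mem_Icc]
      have := hf i hi
      omega
  calc ∑ i ∈ s, f i = ∑ i ∈ s, #((Icc 1 n).bipartiteAbove (fun i j => j ≤ f i) i) :=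
        sum_congr rfl fun i hi => by rw [hrow i hi, Nat.card_Icc, Nat.add_sub_cancel]
    _ = _ := sum_card_bipartiteAbove_eq_sum_card_bipartiteBelow _

theorem disjoint_bound_general
    (F1 F2 : Finset (ℤ × ℤ))
    (hU : UniquelyDetermined F1)
    (hcard : F1.card = F2.card)
    (hdisj : F1 ∩ F2 = ∅)
    (α : ℕ)
    (herr : lineError F1 F2 = 2 * α) :
    F1.card ≤ ∑ i ∈ Finset.Icc 1 α, α / i := by
  have hlevel : ∀ j, j * #{x ∈ F1.image Prod.fst | j ≤ rowSum F1 x} ≤ α := fun j => by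
    have := hU.two_mul_mul_card_rows_le_lineError hcard hdisj j
    rw [herr] at this
    exact_mod_cast le_of_mul_le_mul_left this two_pos
  have hrow : ∀ x ∈ F1.image Prod.fst, rowSum F1 x ≤ α := fun x hx =>
    have hx' : x ∈ {x' ∈ F1.image Prod.fst | rowSum F1 x ≤ rowSum F1 x'} :=
      mem_filter.2 ⟨hx, le_rfl⟩
    (Nat.le_mul_of_pos_right _ (card_pos.2 ⟨x, hx'⟩)).trans (hlevel (rowSum F1 x))
  calc #F1 = ∑ x ∈ F1.image Prod.fst, rowSum F1 x := card_eq_sum_card_image _ _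
    _ = ∑ j ∈ Icc 1 α, #{x ∈ F1.image Prod.fst | j ≤ rowSum F1 x} :=
        sum_eq_sum_Icc_card_filter_le _ _ hrow
    _ ≤ ∑ j ∈ Icc 1 α, α / j := sum_le_sum fun j hj =>
        (Nat.le_div_iff_mul_le (mem_Icc.1 hj).1).2 (mul_comm j _ ▸ hlevel j)

theorem disjoint_bound
    (F1 F2 : Finset (ℤ × ℤ))
    (hU : UniquelyDetermined F1)
    (hcard : F1.card = F2.card)
    (hdisj : F1 ∩ F2 = ∅)
    (α : ℕ) (hα : 0 < α)
    (herr : lineError F1 F2 = 2 * α) :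
    F1.card ≤ ∑ i ∈ Finset.Icc 1 α, α / i :=
  disjoint_bound_general F1 F2 hU hcard hdisj α herr
end

section
/- Let F1 and F2 be finite subsets of ℤ² such that F1 is uniquely determined by its row and column sums, |F1| = |F2|, and the error in the line sums equals 2α for a positive integer α. Let p = |F1 ∩ F2|. Then |F1| ≤ Σ_{i=1}^{α+p} ⌊(α+p)/i⌋. -/
lemma no_switch (F1 : Finset (ℤ × ℤ)) (hU : UniquelyDetermined F1) {a a' b b' : ℤ}
    (h1 : (a,b) ∈ F1) (h2 : (a',b') ∈ F1) (h3 : (a,b') ∉ F1) (h4 : (a',b) ∉ F1) : False := by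
  have haa : a ≠ a' := by rintro rfl; exact h3 h2
  have hbb : b ≠ b' := by rintro rfl; exact h3 h1
  set E : Finset (ℤ × ℤ) := (F1.erase (a,b)).erase (a',b') with hE
  set G : Finset (ℤ × ℤ) := insert (a,b') (insert (a',b) E) with hG
  have hmemE : ∀ q ∈ E, q ∈ F1 := fun q hq => Finset.mem_of_mem_erase (Finset.mem_of_mem_erase hq)
  have hab'E : (a,b') ∉ insert (a',b) E := by
    simp only [Finset.mem_insert]
    rintro (h | h)
    · exact haa (congrArg Prod.fst h)
    · exact h3 (hmemE _ h)
  have ha'bE : (a',b) ∉ E := fun h => h4 (hmemE _ h)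
  have ha'b' : (a',b') ∈ F1.erase (a,b) :=
    Finset.mem_erase.2 ⟨fun h => haa (congrArg Prod.fst h).symm, h2⟩
  have hsum : ∀ (f : ℤ×ℤ → ℕ), f (a,b) + f (a',b') = f (a,b') + f (a',b) →
      ∑ q ∈ G, f q = ∑ q ∈ F1, f q := by
    intro f hf
    have e1 : ∑ q ∈ G, f q = f (a,b') + (f (a',b) + ∑ q ∈ E, f q) := by
      rw [hG, Finset.sum_insert hab'E, Finset.sum_insert ha'bE]
    have e2 : ∑ q ∈ E, f q + f (a',b') = ∑ q ∈ F1.erase (a,b), f q :=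
      Finset.sum_erase_add _ _ ha'b'
    have e3 : ∑ q ∈ F1.erase (a,b), f q + f (a,b) = ∑ q ∈ F1, f q :=
      Finset.sum_erase_add _ _ h1
    omega
  have hrow : ∀ i, rowSum G i = rowSum F1 i := by
    intro i
    unfold rowSum
    rw [Finset.card_filter, Finset.card_filter]
    exact hsum _ (by simp)
  have hcol : ∀ j, colSum G j = colSum F1 j := by
    intro j
    unfold colSum
    rw [Finset.card_filter, Finset.card_filter]
    exact hsum _ (by simp; omega)
  have hGF : G = F1 := hU G hrow hcol
  have : (a,b) ∈ G := hGF ▸ h1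
  rw [hG, hE] at this
  simp only [Finset.mem_insert, Finset.mem_erase] at this
  rcases this with h | h | h
  · exact hbb (congrArg Prod.snd h)
  · exact haa (congrArg Prod.fst h)
  · exact h.2.1 rfl

lemma count_lemma (A₀ : Finset ℤ) (f : ℤ → ℕ) (n : ℕ)
    (hf : ∀ a ∈ A₀, 1 ≤ f a)
    (h : ∀ a ∈ A₀, (A₀.filter fun a' => f a ≤ f a').card * f a ≤ n) :
    ∑ a ∈ A₀, f a ≤ ∑ i ∈ Finset.Icc 1 n, n / i := by
  have hfn : ∀ a ∈ A₀, f a ≤ n := by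
    intro a ha
    have hmem : a ∈ A₀.filter fun a' => f a ≤ f a' := Finset.mem_filter.2 ⟨ha, le_refl _⟩
    have h1 : 1 ≤ (A₀.filter fun a' => f a ≤ f a').card := Finset.card_pos.2 ⟨a, hmem⟩
    calc f a = 1 * f a := (one_mul _).symm
    _ ≤ (A₀.filter fun a' => f a ≤ f a').card * f a := Nat.mul_le_mul_right _ h1
    _ ≤ n := h a ha
  have key : ∀ j, 1 ≤ j → (A₀.filter fun a => j ≤ f a).card ≤ n / j := by
    intro j hj
    rcases (A₀.filter fun a => j ≤ f a).eq_empty_or_nonempty with he | hne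
    · rw [he]; simp
    · obtain ⟨a, ha, hmin⟩ := Finset.exists_min_image _ f hne
      have haA : a ∈ A₀ := (Finset.mem_filter.1 ha).1
      have hja : j ≤ f a := (Finset.mem_filter.1 ha).2
      have hsub : (A₀.filter fun a' => j ≤ f a') ⊆ (A₀.filter fun a' => f a ≤ f a') := by
        intro x hx
        exact Finset.mem_filter.2 ⟨(Finset.mem_filter.1 hx).1, hmin x hx⟩
      rw [Nat.le_div_iff_mul_le hj]
      calc (A₀.filter fun a' => j ≤ f a').card * j
          ≤ (A₀.filter fun a' => f a ≤ f a').card * f a :=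
            Nat.mul_le_mul (Finset.card_le_card hsub) hja
        _ ≤ n := h a haA
  have hlayer : ∑ a ∈ A₀, f a = ∑ j ∈ Finset.Icc 1 n, (A₀.filter fun a => j ≤ f a).card := by
    simp_rw [Finset.card_filter]
    rw [Finset.sum_comm]
    refine Finset.sum_congr rfl fun a ha => ?_
    rw [← Finset.card_filter]
    have : (Finset.Icc 1 n).filter (fun j => j ≤ f a) = Finset.Icc 1 (f a) := by
      ext j
      simp only [Finset.mem_filter, Finset.mem_Icc]
      have := hfn a ha
      omega
    rw [this, Nat.card_Icc]; omega
  rw [hlayer]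
  exact Finset.sum_le_sum fun j hj => key j (Finset.mem_Icc.1 hj).1

-- auxiliary lemmas

lemma rowSum_eq_zero {F : Finset (ℤ × ℤ)} {i : ℤ} (h : ∀ q ∈ F, q.1 ≠ i) : rowSum F i = 0 := by
  unfold rowSum
  rw [Finset.card_eq_zero, Finset.filter_eq_empty_iff]
  exact h

lemma colSum_eq_zero {F : Finset (ℤ × ℤ)} {j : ℤ} (h : ∀ q ∈ F, q.2 ≠ j) : colSum F j = 0 := by
  unfold colSum
  rw [Finset.card_eq_zero, Finset.filter_eq_empty_iff]
  exact h

lemma sum_rowSum (F : Finset (ℤ × ℤ)) (S : Finset ℤ) (hS : ∀ q ∈ F, q.1 ∈ S) :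
    ∑ i ∈ S, rowSum F i = F.card :=
  (Finset.card_eq_sum_card_fiberwise hS).symm

lemma sum_colSum (F : Finset (ℤ × ℤ)) (T : Finset ℤ) (hT : ∀ q ∈ F, q.2 ∈ T) :
    ∑ j ∈ T, colSum F j = F.card :=
  (Finset.card_eq_sum_card_fiberwise hT).symm

lemma rect_lemma (F1 F2 : Finset (ℤ × ℤ))
    (hcard : F1.card = F2.card)
    (α : ℕ) (herr : lineError F1 F2 = 2 * α)
    (A B : Finset ℤ)
    (hAB : ∀ a ∈ A, ∀ b ∈ B, (a,b) ∈ F1)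
    (hcol : ∀ q ∈ F1, q.2 ∉ B → q.1 ∈ A) :
    A.card * B.card ≤ α + (F1 ∩ F2).card := by
  rcases B.eq_empty_or_nonempty with hB | hB
  · simp [hB]
  -- support sets
  set S : Finset ℤ := (F1 ∪ F2).image Prod.fst with hS
  set T : Finset ℤ := (F1 ∪ F2).image Prod.snd with hT
  have hS1 : ∀ q ∈ F1, q.1 ∈ S := fun q hq => Finset.mem_image.2 ⟨q, Finset.mem_union_left _ hq, rfl⟩
  have hS2 : ∀ q ∈ F2, q.1 ∈ S := fun q hq => Finset.mem_image.2 ⟨q, Finset.mem_union_right _ hq, rfl⟩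
  have hT1 : ∀ q ∈ F1, q.2 ∈ T := fun q hq => Finset.mem_image.2 ⟨q, Finset.mem_union_left _ hq, rfl⟩
  have hT2 : ∀ q ∈ F2, q.2 ∈ T := fun q hq => Finset.mem_image.2 ⟨q, Finset.mem_union_right _ hq, rfl⟩
  set d : ℤ → ℤ := fun i => (rowSum F1 i : ℤ) - (rowSum F2 i : ℤ) with hd
  set e : ℤ → ℤ := fun j => (colSum F1 j : ℤ) - (colSum F2 j : ℤ) with he
  -- finsum to finset sums
  have hrs : ∑ᶠ i : ℤ, |d i| = ∑ i ∈ S, |d i| := by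
    apply finsum_eq_sum_of_support_subset
    intro i hi
    simp only [Function.mem_support] at hi
    by_contra hiS
    have h1 : rowSum F1 i = 0 := rowSum_eq_zero (fun q hq h => hiS (h ▸ hS1 q hq))
    have h2 : rowSum F2 i = 0 := rowSum_eq_zero (fun q hq h => hiS (h ▸ hS2 q hq))
    apply hi
    simp [hd, h1, h2]
  have hcs : ∑ᶠ j : ℤ, |e j| = ∑ j ∈ T, |e j| := by
    apply finsum_eq_sum_of_support_subset
    intro j hj
    simp only [Function.mem_support] at hj
    by_contra hjT
    have h1 : colSum F1 j = 0 := colSum_eq_zero (fun q hq h => hjT (h ▸ hT1 q hq))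
    have h2 : colSum F2 j = 0 := colSum_eq_zero (fun q hq h => hjT (h ▸ hT2 q hq))
    apply hj
    simp [he, h1, h2]
  have hsumd : ∑ i ∈ S, d i = 0 := by
    have e1 := sum_rowSum F1 S hS1
    have e2 := sum_rowSum F2 S hS2
    simp only [hd, Finset.sum_sub_distrib]
    rw [← Nat.cast_sum, ← Nat.cast_sum, e1, e2, hcard, sub_self]
  have hsume : ∑ j ∈ T, e j = 0 := by
    have e1 := sum_colSum F1 T hT1
    have e2 := sum_colSum F2 T hT2
    simp only [he, Finset.sum_sub_distrib]
    rw [← Nat.cast_sum, ← Nat.cast_sum, e1, e2, hcard, sub_self]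
  set ρ : ℤ := ∑ i ∈ S, max (d i) 0 with hρ
  set γ : ℤ := ∑ j ∈ T, max (-(e j)) 0 with hγ
  have hρ2 : 2 * ρ = ∑ i ∈ S, |d i| := by
    have : ∀ i, 2 * max (d i) 0 = |d i| + d i := by
      intro i
      rcases le_or_gt 0 (d i) with h | h
      · rw [max_eq_left h, abs_of_nonneg h]; ring
      · rw [max_eq_right h.le, abs_of_neg h]; ring
    rw [hρ, Finset.mul_sum]
    simp_rw [this]
    rw [Finset.sum_add_distrib, hsumd, add_zero]
  have hγ2 : 2 * γ = ∑ j ∈ T, |e j| := by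
    have : ∀ j, 2 * max (-(e j)) 0 = |e j| - e j := by
      intro j
      rcases le_or_gt 0 (e j) with h | h
      · rw [max_eq_right (by omega), abs_of_nonneg h]; ring
      · rw [max_eq_left (by omega), abs_of_neg h]; ring
    rw [hγ, Finset.mul_sum]
    simp_rw [this]
    rw [Finset.sum_sub_distrib, hsume, sub_zero]
  have hργ : ρ + γ = α := by
    have := herr
    unfold lineError at this
    rw [hrs, hcs] at this
    omega
  -- row decompositions
  have split : ∀ (F : Finset (ℤ×ℤ)) (a : ℤ),
      (F.filter (fun q => q.1 = a ∧ q.2 ∈ B)).card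
        + (F.filter (fun q => q.1 = a ∧ q.2 ∉ B)).card = rowSum F a := by
    intro F a
    unfold rowSum
    rw [← Finset.filter_filter, ← Finset.filter_filter]
    exact Finset.card_filter_add_card_filter_not _
  set sB : ℤ → ℕ := fun a => (F2.filter (fun q => q.1 = a ∧ q.2 ∈ B)).card with hsB
  set mB : ℤ → ℕ := fun a => (F2.filter (fun q => q.1 = a ∧ q.2 ∉ B)).card with hmB
  set wB : ℤ → ℕ := fun a => (F1.filter (fun q => q.1 = a ∧ q.2 ∉ B)).card with hwB
  have hrow2 : ∀ a, sB a + mB a = rowSum F2 a := fun a => split F2 a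
  have hrow1 : ∀ a ∈ A, B.card + wB a = rowSum F1 a := by
    intro a ha
    rw [← split F1 a]
    congr 1
    have hBset : F1.filter (fun q => q.1 = a ∧ q.2 ∈ B) = B.image (fun b => (a, b)) := by
      ext q
      simp only [Finset.mem_filter, Finset.mem_image]
      constructor
      · rintro ⟨hq, h1, h2⟩
        exact ⟨q.2, h2, by rw [Prod.ext_iff]; exact ⟨h1.symm, rfl⟩⟩
      · rintro ⟨b, hb, rfl⟩
        exact ⟨hAB a ha b hb, rfl, hb⟩
    rw [hBset, Finset.card_image_of_injective _ (fun x y h => (Prod.ext_iff.1 h).2)]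
  -- fiberwise sums over rows
  set P2 : ℕ := (F2.filter (fun q => q.1 ∈ A ∧ q.2 ∈ B)).card with hP2def
  set M : ℕ := (F2.filter (fun q => q.1 ∈ A ∧ q.2 ∉ B)).card with hMdef
  set W : ℕ := (F1.filter (fun q => q.1 ∈ A ∧ q.2 ∉ B)).card with hWdef
  have fiber_row : ∀ (F : Finset (ℤ×ℤ)) (P : ℤ → Prop) [DecidablePred P],
      (F.filter (fun q => q.1 ∈ A ∧ P q.2)).card
        = ∑ a ∈ A, (F.filter (fun q => q.1 = a ∧ P q.2)).card := by
    intro F P _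
    rw [Finset.card_eq_sum_card_fiberwise (f := Prod.fst) (t := A)
      (fun q hq => (Finset.mem_filter.1 hq).2.1)]
    refine Finset.sum_congr rfl fun a ha => ?_
    congr 1
    rw [Finset.filter_filter]
    apply Finset.filter_congr
    intro q hq
    constructor
    · rintro ⟨⟨_, h2⟩, h1⟩; exact ⟨h1, h2⟩
    · rintro ⟨h1, h2⟩; exact ⟨⟨h1 ▸ ha, h2⟩, h1⟩
  have hP2sum : P2 = ∑ a ∈ A, sB a := fiber_row F2 (fun j => j ∈ B)
  have hMsum : M = ∑ a ∈ A, mB a := fiber_row F2 (fun j => j ∉ B)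
  have hWsum : W = ∑ a ∈ A, wB a := fiber_row F1 (fun j => j ∉ B)
  -- column side
  set T' : Finset ℤ := T.filter (fun j => j ∉ B) with hT'
  have fiber_col : ∀ (F : Finset (ℤ×ℤ)), (∀ q ∈ F, q.2 ∈ T) →
      (F.filter (fun q => q.1 ∈ A ∧ q.2 ∉ B)).card
        = ∑ j ∈ T', ((F.filter (fun q => q.1 ∈ A ∧ q.2 ∉ B)).filter (fun q => q.2 = j)).card := by
    intro F hF
    exact Finset.card_eq_sum_card_fiberwise (f := Prod.snd) (t := T')
      (fun q hq => Finset.mem_filter.2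
        ⟨hF q (Finset.mem_filter.1 hq).1, (Finset.mem_filter.1 hq).2.2⟩)
  have hMcol : M = ∑ j ∈ T', ((F2.filter (fun q => q.1 ∈ A ∧ q.2 ∉ B)).filter
      (fun q => q.2 = j)).card := fiber_col F2 hT2
  have hWcol : W = ∑ j ∈ T', colSum F1 j := by
    rw [hWdef, fiber_col F1 hT1]
    refine Finset.sum_congr rfl fun j hj => ?_
    have hjB : j ∉ B := (Finset.mem_filter.1 hj).2
    congr 1
    rw [Finset.filter_filter]
    apply Finset.filter_congr
    intro q hq
    constructor
    · rintro ⟨_, h2⟩; exact h2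
    · intro h2
      exact ⟨⟨hcol q hq (h2 ▸ hjB), h2 ▸ hjB⟩, h2⟩
  have hMW : (M : ℤ) - W ≤ γ := by
    rw [hMcol, hWcol]
    push_cast
    rw [← Finset.sum_sub_distrib]
    have step : ∀ j ∈ T',
        (((F2.filter (fun q => q.1 ∈ A ∧ q.2 ∉ B)).filter (fun q => q.2 = j)).card : ℤ)
          - (colSum F1 j : ℤ) ≤ max (-(e j)) 0 := by
      intro j hj
      have hle : ((F2.filter (fun q => q.1 ∈ A ∧ q.2 ∉ B)).filter (fun q => q.2 = j)).card
          ≤ colSum F2 j := by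
        apply Finset.card_le_card
        intro q hq
        simp only [Finset.mem_filter] at hq ⊢
        exact ⟨(hq.1).1, hq.2⟩
      have : ((( F2.filter (fun q => q.1 ∈ A ∧ q.2 ∉ B)).filter (fun q => q.2 = j)).card : ℤ)
          - (colSum F1 j : ℤ) ≤ -(e j) := by
        simp only [he]
        have := (Nat.cast_le (α := ℤ)).2 hle
        linarith
      exact this.trans (le_max_left _ _)
    calc ∑ j ∈ T', ((((F2.filter (fun q => q.1 ∈ A ∧ q.2 ∉ B)).filter
            (fun q => q.2 = j)).card : ℤ) - (colSum F1 j : ℤ))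
        ≤ ∑ j ∈ T', max (-(e j)) 0 := Finset.sum_le_sum step
      _ ≤ γ := Finset.sum_le_sum_of_subset_of_nonneg (Finset.filter_subset _ _)
          (fun j _ _ => le_max_right _ _)
  have hdA : ∑ a ∈ A, d a ≤ ρ := by
    have hAS : A ⊆ S := by
      intro a ha
      obtain ⟨b, hb⟩ := hB
      exact hS1 (a, b) (hAB a ha b hb)
    calc ∑ a ∈ A, d a ≤ ∑ a ∈ A, max (d a) 0 := Finset.sum_le_sum (fun a _ => le_max_left _ _)
      _ ≤ ρ := Finset.sum_le_sum_of_subset_of_nonneg hAS (fun i _ _ => le_max_right _ _)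
  have hP2p : P2 ≤ (F1 ∩ F2).card := by
    apply Finset.card_le_card
    intro q hq
    simp only [Finset.mem_filter] at hq
    rw [Finset.mem_inter]
    refine ⟨?_, hq.1⟩
    have := hAB q.1 hq.2.1 q.2 hq.2.2
    rwa [Prod.mk.eta] at this
  have hmain : (A.card : ℤ) * B.card = (∑ a ∈ A, d a) + ((M : ℤ) - W) + P2 := by
    have per_a : ∀ a ∈ A, (B.card : ℤ) = d a + ((mB a : ℤ) - (wB a : ℤ)) + sB a := by
      intro a ha
      have h1 := hrow1 a ha
      have h2 := hrow2 a
      simp only [hd]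
      have c1 : (B.card : ℤ) + wB a = (rowSum F1 a : ℤ) := by exact_mod_cast h1
      have c2 : (sB a : ℤ) + mB a = (rowSum F2 a : ℤ) := by exact_mod_cast h2
      linarith
    have : ∑ a ∈ A, (B.card : ℤ) = ∑ a ∈ A, (d a + ((mB a : ℤ) - (wB a : ℤ)) + sB a) :=
      Finset.sum_congr rfl per_a
    rw [Finset.sum_const, nsmul_eq_mul] at this
    rw [this, Finset.sum_add_distrib, Finset.sum_add_distrib]
    rw [hMsum, hWsum, hP2sum]
    push_cast
    simp only [Finset.sum_sub_distrib]
  have hfinal : (A.card : ℤ) * B.card ≤ (α : ℤ) + ((F1 ∩ F2).card : ℤ) := by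
    rw [hmain]
    have : (P2 : ℤ) ≤ ((F1 ∩ F2).card : ℤ) := Nat.cast_le.2 hP2p
    linarith
  exact_mod_cast hfinal

/-- The set of column indices of points of `F1` in row `a`. -/
def Row (F1 : Finset (ℤ × ℤ)) (a : ℤ) : Finset ℤ :=
  (F1.filter (fun q => q.1 = a)).image Prod.snd

lemma mem_Row {F1 : Finset (ℤ × ℤ)} {a b : ℤ} : b ∈ Row F1 a ↔ (a, b) ∈ F1 := by
  unfold Row
  simp only [Finset.mem_image, Finset.mem_filter]
  constructor
  · rintro ⟨q, ⟨hq, h1⟩, h2⟩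
    rwa [← h1, ← h2, Prod.mk.eta]
  · intro h
    exact ⟨(a, b), ⟨h, rfl⟩, rfl⟩

lemma card_Row {F1 : Finset (ℤ × ℤ)} {a : ℤ} : (Row F1 a).card = rowSum F1 a := by
  unfold Row rowSum
  apply Finset.card_image_of_injOn
  intro q hq q' hq' h
  simp only [Finset.mem_coe, Finset.mem_filter] at hq hq'
  exact Prod.ext (hq.2.trans hq'.2.symm) h

lemma rows_comparable {F1 : Finset (ℤ × ℤ)} (hU : UniquelyDetermined F1) (a a' : ℤ) :
    Row F1 a ⊆ Row F1 a' ∨ Row F1 a' ⊆ Row F1 a := by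
  by_contra hcon
  push_neg at hcon
  obtain ⟨b, hb, hb'⟩ := Finset.not_subset.1 hcon.1
  obtain ⟨b', hb'2, hb2⟩ := Finset.not_subset.1 hcon.2
  exact no_switch F1 hU (mem_Row.1 hb) (mem_Row.1 hb'2)
    (fun h => hb2 (mem_Row.2 h)) (fun h => hb' (mem_Row.2 h))


theorem general_bound
    (F1 F2 : Finset (ℤ × ℤ))
    (hU : UniquelyDetermined F1)
    (hcard : F1.card = F2.card)
    (α : ℕ) (hα : 0 < α)
    (herr : lineError F1 F2 = 2 * α)
    (p : ℕ) (hp : p = (F1 ∩ F2).card) :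
    F1.card ≤ ∑ i ∈ Finset.Icc 1 (α + p), (α + p) / i := by
  classical
  set A₀ : Finset ℤ := F1.image Prod.fst with hA₀
  have hA₀mem : ∀ q ∈ F1, q.1 ∈ A₀ := fun q hq => Finset.mem_image.2 ⟨q, hq, rfl⟩
  have hcardF1 : F1.card = ∑ a ∈ A₀, rowSum F1 a :=
    Finset.card_eq_sum_card_fiberwise hA₀mem
  rw [hcardF1]
  apply count_lemma A₀ (fun a => rowSum F1 a) (α + p)
  · intro a ha
    obtain ⟨q, hq, rfl⟩ := Finset.mem_image.1 ha
    exact Finset.card_pos.2 ⟨q, Finset.mem_filter.2 ⟨hq, rfl⟩⟩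
  · intro a ha
    set B : Finset ℤ := Row F1 a with hB
    set A : Finset ℤ := A₀.filter (fun a' => Row F1 a ⊆ Row F1 a') with hA
    have hAB : ∀ a' ∈ A, ∀ b ∈ B, (a', b) ∈ F1 := by
      intro a' ha' b hb
      exact mem_Row.1 ((Finset.mem_filter.1 ha').2 hb)
    have hcol : ∀ q ∈ F1, q.2 ∉ B → q.1 ∈ A := by
      intro q hq hqB
      rcases rows_comparable hU a q.1 with h | h
      · exact Finset.mem_filter.2 ⟨hA₀mem q hq, h⟩
      · exact absurd (h (mem_Row.2 (by rwa [Prod.mk.eta]))) hqB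
    have hrect := rect_lemma F1 F2 hcard α herr A B hAB hcol
    have hsub : (A₀.filter fun a' => rowSum F1 a ≤ rowSum F1 a') ⊆ A := by
      intro a' ha'
      obtain ⟨ha'0, hle⟩ := Finset.mem_filter.1 ha'
      refine Finset.mem_filter.2 ⟨ha'0, ?_⟩
      rcases rows_comparable hU a a' with h | h
      · exact h
      · have : Row F1 a' = Row F1 a :=
          Finset.eq_of_subset_of_card_le h (by rw [card_Row, card_Row]; exact hle)
        rw [this]
    calc (A₀.filter fun a' => rowSum F1 a ≤ rowSum F1 a').card * rowSum F1 a
        ≤ A.card * B.card := by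
          rw [hB, card_Row]
          exact Nat.mul_le_mul_right _ (Finset.card_le_card hsub)
      _ ≤ α + (F1 ∩ F2).card := hrect
      _ = α + p := by rw [hp]
end

section
/- Let a ≥ 1 and r_1 ≥ r_2 ≥ … ≥ r_a > 0 be integers, and let F1 = {(i,j) ∈ ℤ² : 1 ≤ i ≤ a, 1 ≤ j ≤ r_i} (a set of triangular shape). Let F2 be a finite subset of ℤ² with |F1| = |F2| whose error in the line sums with F1 equals 2α for a positive integer α. Assume that every row containing elements of F1 and every column containing elements of F1 also contains a point of F1 △ F2. Then for every i with 1 ≤ i ≤ a−1 one has r_i − r_{i+1} ≤ α, and symmetrically the column sums of F1 of two consecutive nonempty columns differ by at most α. -/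
/-!
With `δ = 𝟙_{F1} - 𝟙_{F2}`, inclusion–exclusion over the quadrants cut out by a row set `X` and a
column set `Y` gives
`∑_{X × Y} δ - ∑_{Xᶜ × Yᶜ} δ = ∑_{i ∈ X} (r_i(F1) - r_i(F2)) - ∑_{j ∉ Y} (c_j(F1) - c_j(F2))`,
so when `δ` has a sign on one quadrant, the opposite one is bounded by the line errors on `X`, `Yᶜ`.

For rows `i, i + 1` let `X = [1, i]` and `J = (r_{i+1}, r_i]`. Each column of `J` meets `F1 △ F2`,
so it contributes at least `2` to `#(F1 \ F2) + #(F2 \ F1) + (column error)`. In the columns `J`,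
the points of `F1 \ F2` lie in `X × [1, r_i] ⊆ F1` and those of `F2 \ F1` in
`Xᶜ × [1, r_{i+1}]ᶜ`, which misses `F1`. The quadrant bounds for these two boxes use every line
error once, whence `2 (r_i - r_{i+1}) ≤ 2α`. Columns follow by transposition: the transpose of a
staircase is a staircase whose row lengths are the column sums.
-/

open Finset
open scoped symmDiff

lemma card_filter_and_add_card_filter_not {α : Type*} (s : Finset α) (P Q : α → Prop)
    [DecidablePred P] [DecidablePred Q] :
    #{x ∈ s | P x ∧ Q x} + #{x ∈ s | ¬Q x} = #{x ∈ s | P x} + #{x ∈ s | ¬P x ∧ ¬Q x} := by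
  simp only [card_filter, ← sum_add_distrib]
  exact sum_congr rfl fun x _ => by by_cases P x <;> by_cases Q x <;> simp [*]

lemma card_filter_sub_card_filter {α : Type*} [DecidableEq α] (s t : Finset α) (P : α → Prop)
    [DecidablePred P] :
    (#{x ∈ s | P x} : ℤ) - #{x ∈ t | P x} = #{x ∈ s \ t | P x} - #{x ∈ t \ s | P x} := by
  have hsplit : ∀ s t : Finset α, #{x ∈ s | P x} = #{x ∈ s \ t | P x} + #{x ∈ s ∩ t | P x} := by
    intro s t
    rw [← card_union_of_disjoint (disjoint_filter_filter (disjoint_sdiff_inter s t)),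
      ← filter_union, sdiff_union_inter]
  rw [hsplit s t, hsplit t s, inter_comm]
  push_cast
  ring

section LineErrorOn

variable {α β : Type*} [DecidableEq β]

noncomputable def lineErrorOn (g : α → β) (s t : Finset α) (S : Set β) : ℤ :=
  ∑ᶠ b ∈ S, |(#{x ∈ s | g x = b} : ℤ) - #{x ∈ t | g x = b}|

variable (g : α → β) (s t : Finset α)

lemma lineErrorOn_comm (S : Set β) : lineErrorOn g s t S = lineErrorOn g t s S := by
  simp only [lineErrorOn, abs_sub_comm]

lemma support_abs_card_fiber_sub_subset :
    Function.support (fun b => |(#{x ∈ s | g x = b} : ℤ) - #{x ∈ t | g x = b}|) ⊆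
      (s.image g ∪ t.image g : Finset β) := by
  intro b hb
  by_contra hbg
  have hempty : ∀ u, b ∉ u.image g → #{x ∈ u | g x = b} = 0 := fun u hbu =>
    card_eq_zero.2 <| filter_eq_empty_iff.2 fun x hx hxb => hbu (mem_image.2 ⟨x, hx, hxb⟩)
  simp only [coe_union, Set.mem_union, mem_coe, not_or] at hbg
  simp [hempty s hbg.1, hempty t hbg.2] at hb

lemma lineErrorOn_union {S T : Set β} (hST : Disjoint S T) :
    lineErrorOn g s t (S ∪ T) = lineErrorOn g s t S + lineErrorOn g s t T :=
  finsum_mem_union' hST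
    ((s.image g ∪ t.image g).finite_toSet.subset
      (Set.inter_subset_right.trans (support_abs_card_fiber_sub_subset g s t)))
    ((s.image g ∪ t.image g).finite_toSet.subset
      (Set.inter_subset_right.trans (support_abs_card_fiber_sub_subset g s t)))

lemma lineErrorOn_add_compl (S : Set β) :
    lineErrorOn g s t S + lineErrorOn g s t Sᶜ = lineErrorOn g s t Set.univ := by
  rw [← lineErrorOn_union g s t disjoint_compl_right, Set.union_compl_self]

lemma abs_card_filter_sub_le_lineErrorOn (S : Set β) [DecidablePred (· ∈ S)] :
    |(#{x ∈ s | g x ∈ S} : ℤ) - #{x ∈ t | g x ∈ S}| ≤ lineErrorOn g s t S := by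
  set T := (s.image g ∪ t.image g).filter (· ∈ S)
  have hcard : ∀ u, u.image g ⊆ s.image g ∪ t.image g →
      #{x ∈ u | g x ∈ S} = ∑ b ∈ T, #{x ∈ u | g x = b} := by
    intro u hu
    rw [sum_card_fiberwise_eq_card_filter]
    refine congrArg card (filter_congr fun x hx => ?_)
    simp [T, hu (mem_image_of_mem g hx)]
  have herr : lineErrorOn g s t S = ∑ b ∈ T, |(#{x ∈ s | g x = b} : ℤ) - #{x ∈ t | g x = b}| := by
    refine finsum_mem_eq_sum_of_subset _ ?_ (by simp [T, Set.subset_def])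
    intro b ⟨hbS, hb⟩
    simpa [T, hbS] using support_abs_card_fiber_sub_subset g s t hb
  rw [herr, hcard s subset_union_left, hcard t subset_union_right]
  push_cast
  rw [← sum_sub_distrib]
  exact abs_sum_le_sum_abs _ _

end LineErrorOn

section Quadrants

variable {α β : Type*} [DecidableEq α] [DecidableEq β]

lemma card_sdiff_filter_le_lineErrorOn (g h : α → β) (s t : Finset α) (P Q : Set β)
    (K : α → Prop) [DecidablePred K]
    (hK : ∀ x ∈ s \ t, K x → g x ∈ P ∧ h x ∈ Q)
    (hin : ∀ x ∈ t, g x ∈ P → h x ∈ Q → x ∈ s)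
    (hcorner : ∀ x ∈ s, g x ∉ P → h x ∉ Q → x ∈ t) :
    (#{x ∈ s \ t | K x} : ℤ) ≤ lineErrorOn g s t P + lineErrorOn h s t Qᶜ := by
  classical
  have hs := card_filter_and_add_card_filter_not s (g · ∈ P) (h · ∈ Q)
  have ht := card_filter_and_add_card_filter_not t (g · ∈ P) (h · ∈ Q)
  have hdiff := card_filter_sub_card_filter s t (fun x => g x ∈ P ∧ h x ∈ Q)
  have hrow := (abs_le.1 (abs_card_filter_sub_le_lineErrorOn g s t P)).2
  have hcol := (abs_le.1 (abs_card_filter_sub_le_lineErrorOn h s t Qᶜ)).1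
  simp only [Set.mem_compl_iff] at hcol
  have hK' : #{x ∈ s \ t | K x} ≤ #{x ∈ s \ t | g x ∈ P ∧ h x ∈ Q} :=
    card_le_card fun x hx => by
      rw [mem_filter] at hx ⊢
      exact ⟨hx.1, hK x hx.1 hx.2⟩
  have hin' : #{x ∈ t \ s | g x ∈ P ∧ h x ∈ Q} = 0 :=
    card_eq_zero.2 <| filter_eq_empty_iff.2 fun x hx hPQ =>
      (mem_sdiff.1 hx).2 (hin x (mem_sdiff.1 hx).1 hPQ.1 hPQ.2)
  have hcorner' : #{x ∈ s | ¬g x ∈ P ∧ ¬h x ∈ Q} ≤ #{x ∈ t | ¬g x ∈ P ∧ ¬h x ∈ Q} :=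
    card_le_card fun x hx => by
      rw [mem_filter] at hx ⊢
      exact ⟨hcorner x hx.1 hx.2.1 hx.2.2, hx.2⟩
  linarith

lemma two_mul_card_le_card_sdiff_add_lineErrorOn (g : α → β) (s t : Finset α) (J : Finset β)
    (hJ : ∀ b ∈ J, ∃ x ∈ s ∆ t, g x = b) :
    2 * (#J : ℤ) ≤
      #{x ∈ s \ t | g x ∈ J} + #{x ∈ t \ s | g x ∈ J} + lineErrorOn g s t J := by
  rw [lineErrorOn, finsum_mem_coe_finset, ← sum_card_fiberwise_eq_card_filter,
    ← sum_card_fiberwise_eq_card_filter, card_eq_sum_ones]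
  push_cast
  rw [mul_sum, ← sum_add_distrib, ← sum_add_distrib]
  refine sum_le_sum fun b hb => ?_
  obtain ⟨x, hx, rfl⟩ := hJ b hb
  have hpos : 0 < #{y ∈ s \ t | g y = g x} + #{y ∈ t \ s | g y = g x} := by
    rcases mem_symmDiff.1 hx with hx | hx
    · have : 0 < #{y ∈ s \ t | g y = g x} := card_pos.2 ⟨x, mem_filter.2 ⟨mem_sdiff.2 hx, rfl⟩⟩
      omega
    · have : 0 < #{y ∈ t \ s | g y = g x} := card_pos.2 ⟨x, mem_filter.2 ⟨mem_sdiff.2 hx, rfl⟩⟩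
      omega
  rw [card_filter_sub_card_filter s t (g · = g x)]
  rcases abs_cases ((#{y ∈ s \ t | g y = g x} : ℤ) - #{y ∈ t \ s | g y = g x}) with h | h <;>
    omega

end Quadrants

lemma lineErrorOn_compl_Icc_add_Icc_add_Ioc {α : Type*} (g : α → ℤ) (s t : Finset α) {c R : ℤ}
    (hc : 0 ≤ c) (hcR : c ≤ R) :
    lineErrorOn g s t (Set.Icc 1 R)ᶜ + lineErrorOn g s t (Set.Icc 1 c)
      + lineErrorOn g s t (Ioc c R) = lineErrorOn g s t Set.univ := by
  have hsplit : Set.Icc 1 c ∪ Set.Ioc c R = Set.Icc 1 R := by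
    ext y
    simp only [Set.mem_union, Set.mem_Icc, Set.mem_Ioc]
    omega
  have hdisj : Disjoint (Set.Icc 1 c) (Set.Ioc c R) :=
    Set.disjoint_left.2 fun y hy hy' => by
      simp only [Set.mem_Icc, Set.mem_Ioc] at hy hy'
      omega
  rw [coe_Ioc, add_assoc, ← lineErrorOn_union _ _ _ hdisj, hsplit, add_comm,
    lineErrorOn_add_compl]

lemma lineError_eq_lineErrorOn (F G : Finset (ℤ × ℤ)) :
    lineError F G = lineErrorOn Prod.fst F G Set.univ + lineErrorOn Prod.snd F G Set.univ := by
  simp only [lineErrorOn, finsum_mem_univ]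
  rfl

theorem two_mul_sub_le_lineError_of_rectangle {F G : Finset (ℤ × ℤ)} {X : Set ℤ} {c R : ℤ}
    (hc : 0 ≤ c) (hcR : c ≤ R)
    (hrect : ∀ x ∈ X, ∀ y, 1 ≤ y → y ≤ R → (x, y) ∈ F)
    (hout : ∀ p ∈ F, p.1 ∉ X → 1 ≤ p.2 ∧ p.2 ≤ c)
    (htouch : ∀ j, c < j → j ≤ R → ∃ q ∈ F ∆ G, q.2 = j) :
    2 * (R - c) ≤ lineError F G := by
  set J := Ioc c R
  have hJ := two_mul_card_le_card_sdiff_add_lineErrorOn Prod.snd F G J fun j hj =>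
    htouch j (mem_Ioc.1 hj).1 (mem_Ioc.1 hj).2
  have hA := card_sdiff_filter_le_lineErrorOn Prod.fst Prod.snd F G X (Set.Icc 1 R) (·.2 ∈ J)
    (fun p hp hpJ => by
      rw [mem_Ioc] at hpJ
      refine ⟨by_contra fun hpX => ?_, by simp only [Set.mem_Icc]; omega⟩
      have := hout p (mem_sdiff.1 hp).1 hpX
      omega)
    (fun p _ hpX hpR => hrect p.1 hpX p.2 hpR.1 hpR.2)
    (fun p hp hpX hpR => absurd (hout p hp hpX) fun h => hpR ⟨h.1, h.2.trans hcR⟩)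
  have hB := card_sdiff_filter_le_lineErrorOn Prod.fst Prod.snd G F Xᶜ (Set.Icc 1 c)ᶜ (·.2 ∈ J)
    (fun p hp hpJ => by
      rw [mem_Ioc] at hpJ
      refine ⟨fun hpX => (mem_sdiff.1 hp).2 (hrect p.1 hpX p.2 (by omega) hpJ.2), ?_⟩
      simp only [Set.mem_compl_iff, Set.mem_Icc]
      omega)
    (fun p hp hpX hpc => (hpc (hout p hp hpX)).elim)
    (fun p _ hpX hpc => by
      simp only [Set.mem_compl_iff, not_not, Set.mem_Icc] at hpX hpc
      exact hrect p.1 hpX p.2 hpc.1 (hpc.2.trans hcR))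
  rw [compl_compl, lineErrorOn_comm, lineErrorOn_comm (s := G)] at hB
  have hrows := lineErrorOn_add_compl Prod.fst F G X
  have hcols := lineErrorOn_compl_Icc_add_Icc_add_Ioc Prod.snd F G hc hcR
  rw [Int.card_Ioc, Int.toNat_of_nonneg (by omega)] at hJ
  rw [lineError_eq_lineErrorOn]
  linarith

def Finset.transpose {α β : Type*} (F : Finset (α × β)) : Finset (β × α) :=
  F.map (Equiv.prodComm α β).toEmbedding

@[simp]
lemma Finset.mem_transpose {α β : Type*} {F : Finset (α × β)} {p : β × α} :
    p ∈ F.transpose ↔ p.swap ∈ F := by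
  simp [Finset.transpose, mem_map_equiv]

lemma rowSum_transpose (F : Finset (ℤ × ℤ)) (i : ℤ) : rowSum F.transpose i = colSum F i := by
  rw [rowSum, colSum, Finset.transpose, filter_map, card_map]
  rfl

lemma colSum_transpose (F : Finset (ℤ × ℤ)) (j : ℤ) : colSum F.transpose j = rowSum F j := by
  rw [rowSum, colSum, Finset.transpose, filter_map, card_map]
  rfl

lemma lineError_transpose (F G : Finset (ℤ × ℤ)) :
    lineError F.transpose G.transpose = lineError F G := by
  simp only [lineError, rowSum_transpose, colSum_transpose]
  exact add_comm _ _

lemma mem_iff_one_le_and_le_card {S : Finset ℤ}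
    (hS : ∀ y ∈ S, 1 ≤ y ∧ ∀ x, 1 ≤ x → x ≤ y → x ∈ S) {x : ℤ} : x ∈ S ↔ 1 ≤ x ∧ x ≤ #S := by
  constructor
  · intro hx
    have hsub : Icc 1 x ⊆ S := fun y hy => (hS x hx).2 y (mem_Icc.1 hy).1 (mem_Icc.1 hy).2
    have := card_le_card hsub
    rw [Int.card_Icc] at this
    exact ⟨(hS x hx).1, by omega⟩
  · rintro ⟨hx1, hxS⟩
    by_contra hx
    have hsub : S ⊆ Icc 1 (x - 1) := fun y hy =>
      mem_Icc.2 ⟨(hS y hy).1, by_contra fun hyx => hx ((hS y hy).2 x hx1 (by omega))⟩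
    have := card_le_card hsub
    rw [Int.card_Icc] at this
    omega

structure IsStaircase (F : Finset (ℤ × ℤ)) (a : ℤ) (r : ℤ → ℤ) : Prop where
  mem_iff : ∀ p : ℤ × ℤ, p ∈ F ↔ 1 ≤ p.1 ∧ p.1 ≤ a ∧ 1 ≤ p.2 ∧ p.2 ≤ r p.1
  antitoneOn : AntitoneOn r (Set.Icc 1 a)
  pos : ∀ i ∈ Set.Icc 1 a, 0 < r i

namespace IsStaircase

variable {F G : Finset (ℤ × ℤ)} {a : ℤ} {r : ℤ → ℤ}

theorem two_mul_sub_le_lineError (hF : IsStaircase F a r)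
    (hcols : ∀ j, (∃ p ∈ F, p.2 = j) → ∃ q ∈ F ∆ G, q.2 = j) {i : ℤ} (hi : 1 ≤ i)
    (hia : i + 1 ≤ a) : 2 * (r i - r (i + 1)) ≤ lineError F G := by
  have hr : ∀ x y, 1 ≤ x → x ≤ y → y ≤ a → r y ≤ r x := fun x y hx hxy hy =>
    hF.antitoneOn ⟨hx, by omega⟩ ⟨by omega, hy⟩ hxy
  have hpos := hF.pos (i + 1) ⟨by omega, hia⟩
  refine two_mul_sub_le_lineError_of_rectangle (X := Set.Icc 1 i) hpos.le
    (hr i (i + 1) hi (by omega) hia)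
    (fun x hx y hy hyr => (hF.mem_iff _).2
      ⟨hx.1, by linarith [hx.2], hy, hyr.trans (hr x i hx.1 hx.2 (by omega))⟩)
    (fun p hp hpi => ?_)
    (fun j hj hjr => hcols j ⟨(i, j), (hF.mem_iff _).2 ⟨hi, by omega, by omega, hjr⟩, rfl⟩)
  obtain ⟨h1, ha, h2, h3⟩ := (hF.mem_iff p).1 hp
  have := hr (i + 1) p.1 (by omega) (by simp only [Set.mem_Icc] at hpi; omega) ha
  exact ⟨h2, h3.trans this⟩

lemma mem_iff_le_colSum (hF : IsStaircase F a r) {x j : ℤ} :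
    (x, j) ∈ F ↔ 1 ≤ x ∧ x ≤ colSum F j := by
  have hcol : colSum F j = #((F.filter (·.2 = j)).image Prod.fst) := by
    rw [colSum, card_image_of_injOn]
    intro p hp q hq hpq
    exact Prod.ext hpq ((mem_filter.1 hp).2.trans (mem_filter.1 hq).2.symm)
  have hmem : ∀ y, y ∈ (F.filter (·.2 = j)).image Prod.fst ↔ (y, j) ∈ F := by
    intro y
    simp only [mem_image, mem_filter]
    exact ⟨fun ⟨p, ⟨hp, hpj⟩, hpy⟩ => hpy ▸ hpj ▸ hp, fun h => ⟨(y, j), ⟨h, rfl⟩, rfl⟩⟩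
  rw [hcol, ← hmem]
  refine mem_iff_one_le_and_le_card fun y hy => ?_
  obtain ⟨hy1, hya, hj1, hjr⟩ := (hF.mem_iff _).1 ((hmem y).1 hy)
  refine ⟨hy1, fun x hx hxy => (hmem x).2 ((hF.mem_iff _).2 ⟨hx, by omega, hj1, ?_⟩)⟩
  exact hjr.trans (hF.antitoneOn ⟨hx, by omega⟩ ⟨hy1, hya⟩ hxy)

theorem transpose (hF : IsStaircase F a r) (ha : 1 ≤ a) :
    IsStaircase F.transpose (r 1) (fun j => colSum F j) where
  mem_iff := by
    rintro ⟨x, y⟩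
    rw [mem_transpose, Prod.swap_prod_mk]
    refine ⟨fun h => ?_, fun h => hF.mem_iff_le_colSum.2 h.2.2⟩
    obtain ⟨hy, hya, hx, hxr⟩ := (hF.mem_iff _).1 h
    exact ⟨hx, hxr.trans (hF.antitoneOn ⟨le_rfl, ha⟩ ⟨hy, hya⟩ hy), hF.mem_iff_le_colSum.1 h⟩
  antitoneOn y hy y' _ hyy' := by
    show (colSum F y' : ℤ) ≤ colSum F y
    rcases Nat.eq_zero_or_pos (colSum F y') with h0 | hpos
    · simp [h0]
    · have hm : ((colSum F y' : ℤ), y') ∈ F := hF.mem_iff_le_colSum.2 ⟨by omega, le_rfl⟩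
      obtain ⟨hm1, hma, -, hmr⟩ := (hF.mem_iff _).1 hm
      have hmy : ((colSum F y' : ℤ), y) ∈ F := (hF.mem_iff _).2 ⟨hm1, hma, hy.1, hyy'.trans hmr⟩
      exact (hF.mem_iff_le_colSum.1 hmy).2
  pos y hy := by
    have : (1, y) ∈ F := (hF.mem_iff _).2 ⟨le_rfl, ha, hy.1, hy.2⟩
    have := (hF.mem_iff_le_colSum).1 this
    exact_mod_cast this.1.trans this.2

end IsStaircase

theorem consecutive_line_sums_close_general
    (a : ℤ) (ha : 1 ≤ a)
    (r : ℤ → ℤ)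
    (hrpos : ∀ i, 1 ≤ i → i ≤ a → 0 < r i)
    (hrmono : ∀ i, 1 ≤ i → i + 1 ≤ a → r (i + 1) ≤ r i)
    (F1 F2 : Finset (ℤ × ℤ))
    -- `F1` has triangular shape: `F1 = {(i,j) : 1 ≤ i ≤ a, 1 ≤ j ≤ r i}`
    (hF1 : ∀ p : ℤ × ℤ, p ∈ F1 ↔ 1 ≤ p.1 ∧ p.1 ≤ a ∧ 1 ≤ p.2 ∧ p.2 ≤ r p.1)
    (α : ℕ)
    (herr : lineError F1 F2 = 2 * α)
    -- every nonempty row of `F1` contains a point of `F1 △ F2`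
    (hrows : ∀ i : ℤ, (∃ p ∈ F1, p.1 = i) → ∃ q ∈ (F1 \ F2) ∪ (F2 \ F1), q.1 = i)
    -- every nonempty column of `F1` contains a point of `F1 △ F2`
    (hcols : ∀ j : ℤ, (∃ p ∈ F1, p.2 = j) → ∃ q ∈ (F1 \ F2) ∪ (F2 \ F1), q.2 = j) :
    -- row sums of consecutive rows differ by at most `α`
    (∀ i, 1 ≤ i → i ≤ a - 1 → r i - r (i + 1) ≤ α) ∧
    -- column sums of consecutive nonempty columns differ by at most `α`
    (∀ j, 1 ≤ j → j + 1 ≤ r 1 → (colSum F1 j : ℤ) - (colSum F1 (j + 1) : ℤ) ≤ α) := by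
  have hr : AntitoneOn r (Set.Icc 1 a) :=
    antitoneOn_of_succ_le Set.ordConnected_Icc fun i _ hi hi' => by
      rw [Order.succ_eq_add_one] at hi' ⊢
      exact hrmono i hi.1 hi'.2
  have hF : IsStaircase F1 a r := ⟨hF1, hr, fun i hi => hrpos i hi.1 hi.2⟩
  have hcols_transpose : ∀ j, (∃ p ∈ F1.transpose, p.2 = j) →
      ∃ q ∈ F1.transpose ∆ F2.transpose, q.2 = j := by
    rintro j ⟨p, hp, rfl⟩
    obtain ⟨q, hq, hqj⟩ := hrows p.2 ⟨p.swap, mem_transpose.1 hp, rfl⟩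
    exact ⟨q.swap, by simpa [mem_symmDiff] using hq, hqj⟩
  refine ⟨fun i hi hia => ?_, fun j hj hjr => ?_⟩
  · have := hF.two_mul_sub_le_lineError hcols hi (by omega)
    omega
  · have := (hF.transpose ha).two_mul_sub_le_lineError hcols_transpose hj hjr
    rw [lineError_transpose] at this
    omega

theorem consecutive_line_sums_close
    (a : ℤ) (ha : 1 ≤ a)
    (r : ℤ → ℤ)
    (hrpos : ∀ i, 1 ≤ i → i ≤ a → 0 < r i)
    (hrmono : ∀ i, 1 ≤ i → i + 1 ≤ a → r (i + 1) ≤ r i)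
    (F1 F2 : Finset (ℤ × ℤ))
    -- `F1` has triangular shape: `F1 = {(i,j) : 1 ≤ i ≤ a, 1 ≤ j ≤ r i}`
    (hF1 : ∀ p : ℤ × ℤ, p ∈ F1 ↔ 1 ≤ p.1 ∧ p.1 ≤ a ∧ 1 ≤ p.2 ∧ p.2 ≤ r p.1)
    (hcard : F1.card = F2.card)
    (α : ℕ) (hα : 0 < α)
    (herr : lineError F1 F2 = 2 * α)
    -- every nonempty row of `F1` contains a point of `F1 △ F2`
    (hrows : ∀ i : ℤ, (∃ p ∈ F1, p.1 = i) → ∃ q ∈ (F1 \ F2) ∪ (F2 \ F1), q.1 = i)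
    -- every nonempty column of `F1` contains a point of `F1 △ F2`
    (hcols : ∀ j : ℤ, (∃ p ∈ F1, p.2 = j) → ∃ q ∈ (F1 \ F2) ∪ (F2 \ F1), q.2 = j) :
    -- row sums of consecutive rows differ by at most `α`
    (∀ i, 1 ≤ i → i ≤ a - 1 → r i - r (i + 1) ≤ α) ∧
    -- column sums of consecutive nonempty columns differ by at most `α`
    (∀ j, 1 ≤ j → j + 1 ≤ r 1 → (colSum F1 j : ℤ) - (colSum F1 (j + 1) : ℤ) ≤ α) :=
  consecutive_line_sums_close_general a ha r hrpos hrmono F1 F2 hF1 α herr hrows hcols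
end

section
/- Let F1 and F2 be finite subsets of ℤ² such that F1 is uniquely determined by its row and column sums, |F1| = |F2|, and the error in the line sums equals 2α for a positive integer α. Let p = |F1 ∩ F2|. Then |F1| ≤ p + (α+1)(α − 1/2) + (α+1)·√(2p + (2α−1)²/4). -/
/-!
Since `F1` admits no switching rectangle, its columns, read as sets of rows, form a chain; let
`d` be the number of distinct nonempty ones. Their lengths are distinct, so `d (d + 1) ≤ 2 |F1|`.
With `ψ = columnRank F1` and `v = rowRank F1`, a point `(i, j)` lies in `F1` exactly when
`v i < ψ j`. So the potential `ψ j - v i` is `≥ 1` on `F1 \ F2` and `≤ 0` on `F2 \ F1`, and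
`|F1 \ F2|` is at most the difference of its sums over `F1` and `F2`. That difference depends
only on the line sums, and since `0 ≤ ψ, v ≤ d` it is at most `d / 2` times the error. Thus
`m = |F1 \ F2| ≤ α d`, so `m ^ 2 ≤ 2 α ^ 2 (p + m)`; solving this quadratic inequality for `m`
gives the bound.
-/

open Finset

lemma sum_sdiff_union_add_sum {ι M : Type*} [DecidableEq ι] [AddCommMonoid M]
    {F P Q : Finset ι} (hP : P ⊆ F) (hQ : Disjoint Q F) (f : ι → M) :
    ∑ x ∈ (F \ P) ∪ Q, f x + ∑ x ∈ P, f x = ∑ x ∈ F, f x + ∑ x ∈ Q, f x := by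
  rw [sum_union (hQ.symm.mono_left sdiff_subset), add_right_comm, sum_sdiff hP]

lemma sum_switch {α β M : Type*} [DecidableEq α] [DecidableEq β] [AddCancelCommMonoid M]
    {F : Finset (α × β)} {i i' : α} {j j' : β} (hi : i ≠ i')
    (h₁ : (i, j) ∈ F) (h₂ : (i', j') ∈ F) (h₃ : (i, j') ∉ F) (h₄ : (i', j) ∉ F)
    {f : α × β → M} (hf : f (i, j) + f (i', j') = f (i, j') + f (i', j)) :
    ∑ x ∈ (F \ {(i, j), (i', j')}) ∪ {(i, j'), (i', j)}, f x = ∑ x ∈ F, f x := by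
  have hP : {(i, j), (i', j')} ⊆ F := by simp [insert_subset_iff, h₁, h₂]
  have hQ : Disjoint {(i, j'), (i', j)} F := by simp [h₃, h₄]
  have := sum_sdiff_union_add_sum hP hQ f
  rwa [sum_pair (by simp [hi]), sum_pair (by simp [hi]), hf, add_left_inj] at this

lemma card_mul_succ_le_two_mul_sum (s : Finset ℕ) (hs : 0 ∉ s) :
    #s * (#s + 1) ≤ 2 * ∑ n ∈ s, n := by
  induction s using Finset.induction_on_max with
  | empty => simp
  | insert a s hlt ih =>
    have ha : a ∉ s := fun h => (hlt a h).false
    have ha0 : a ≠ 0 := fun h => hs (h ▸ mem_insert_self a s)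
    have hcard : #s + 1 ≤ a := by
      have hsub : s ⊆ Ioo 0 a := fun x hx =>
        mem_Ioo.2 ⟨Nat.pos_of_ne_zero fun h => hs (h ▸ mem_insert_of_mem hx), hlt x hx⟩
      have := card_le_card hsub
      rw [Nat.card_Ioo] at this
      omega
    have ih' := ih fun h => hs (mem_insert_of_mem h)
    rw [card_insert_of_notMem ha, sum_insert ha]
    nlinarith

lemma two_mul_mul_le_mul_abs_add_mul {w d : ℤ} (hw₀ : 0 ≤ w) (hwd : w ≤ d) (x : ℤ) :
    2 * (w * x) ≤ d * |x| + d * x := by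
  rcases le_total 0 x with hx | hx
  · rw [abs_of_nonneg hx]; nlinarith
  · rw [abs_of_nonpos hx]; nlinarith

section LineCount

variable {α β : Type*} [DecidableEq β] (π : α → β)

lemma sum_comp_eq_sum_card_mul {s : Finset α} {t : Finset β} (h : ∀ x ∈ s, π x ∈ t)
    (g : β → ℤ) : ∑ x ∈ s, g (π x) = ∑ j ∈ t, #{x ∈ s | π x = j} * g j := by
  rw [← sum_fiberwise_of_maps_to h]
  refine sum_congr rfl fun j _ => ?_
  rw [sum_congr rfl fun x hx => congrArg g (mem_filter.1 hx).2, sum_const, nsmul_eq_mul]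

lemma two_mul_sum_sub_sum_le [DecidableEq α] (w : β → ℕ) {d : ℕ} (hw : ∀ j, w j ≤ d)
    (F G : Finset α) :
    2 * (∑ x ∈ F, (w (π x) : ℤ) - ∑ x ∈ G, (w (π x) : ℤ)) ≤
      d * ∑ᶠ j, |(#{x ∈ F | π x = j} : ℤ) - #{x ∈ G | π x = j}| + d * (#F - #G) := by
  set T := (F ∪ G).image π
  have hF : ∀ x ∈ F, π x ∈ T := fun x hx => mem_image_of_mem π (mem_union_left G hx)
  have hG : ∀ x ∈ G, π x ∈ T := fun x hx => mem_image_of_mem π (mem_union_right F hx)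
  have hsupp : Function.support
      (fun j => |(#{x ∈ F | π x = j} : ℤ) - #{x ∈ G | π x = j}|) ⊆ T := by
    intro j hj
    by_contra hjT
    refine hj ?_
    have hempty : ∀ s ⊆ F ∪ G, {x ∈ s | π x = j} = ∅ := fun s hs =>
      filter_eq_empty_iff.2 fun x hx hxj => hjT (hxj ▸ mem_image_of_mem π (hs hx))
    simp [hempty F subset_union_left, hempty G subset_union_right]
  rw [finsum_eq_sum_of_support_subset _ hsupp,
    sum_comp_eq_sum_card_mul π hF (fun j => (w j : ℤ)),
    sum_comp_eq_sum_card_mul π hG (fun j => (w j : ℤ)),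
    card_eq_sum_card_fiberwise hF, card_eq_sum_card_fiberwise hG]
  push_cast
  rw [← sum_sub_distrib, ← sum_sub_distrib, mul_sum, mul_sum, mul_sum, ← sum_add_distrib]
  refine sum_le_sum fun j _ => ?_
  rw [← sub_mul, mul_comm _ (w j : ℤ)]
  exact two_mul_mul_le_mul_abs_add_mul (Nat.cast_nonneg _) (by exact_mod_cast hw j) _

end LineCount

lemma le_of_sq_le_two_mul_sq_mul {a P M : ℝ} (ha : 1 ≤ a) (hP : 0 ≤ P)
    (hM : M ^ 2 ≤ 2 * a ^ 2 * (P + M)) :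
    M ≤ (a + 1) * (a - 1 / 2) + (a + 1) * √(2 * P + (2 * a - 1) ^ 2 / 4) := by
  set Q := √(2 * P + (2 * a - 1) ^ 2 / 4)
  have hQsq : Q ^ 2 = 2 * P + (2 * a - 1) ^ 2 / 4 := Real.sq_sqrt (by positivity)
  have hQ : a - 1 / 2 ≤ Q := Real.le_sqrt_of_sq_le (by nlinarith)
  obtain ⟨R, hRdef⟩ : ∃ R, R = (a + 1) * (a - 1 / 2) + (a + 1) * Q := ⟨_, rfl⟩
  rw [← hRdef]
  have hR : a ^ 2 ≤ R := by nlinarith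
  have hRroot : 2 * a ^ 2 * (P + R) ≤ R ^ 2 := by
    have hfac : R ^ 2 - 2 * a ^ 2 * (P + R)
        = (a - 1 / 2 + Q) * ((2 * a + 1) * Q - a ^ 2 - 1 / 2) := by
      rw [hRdef]; linear_combination a ^ 2 * hQsq
    have := mul_nonneg (by linarith : 0 ≤ a - 1 / 2 + Q)
      (by nlinarith : 0 ≤ (2 * a + 1) * Q - a ^ 2 - 1 / 2)
    linarith
  -- `x ↦ x ^ 2 - 2 a ^ 2 (P + x)` increases beyond `a ^ 2`, so `M > R` would contradict `hM`.
  by_contra! h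
  nlinarith [mul_pos (sub_pos.2 h) (by linarith : 0 < M + R - 2 * a ^ 2)]

def column (F : Finset (ℤ × ℤ)) (j : ℤ) : Finset ℤ := {x ∈ F | x.2 = j}.image Prod.fst

@[simp]
lemma mem_column {F : Finset (ℤ × ℤ)} {i j : ℤ} : i ∈ column F j ↔ (i, j) ∈ F := by
  simp [column]

lemma card_column (F : Finset (ℤ × ℤ)) (j : ℤ) : #(column F j) = colSum F j :=
  card_image_of_injOn fun _ hx _ hy h =>
    Prod.ext h (((mem_filter.1 hx).2).trans ((mem_filter.1 hy).2).symm)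

lemma UniquelyDetermined.column_subset_or_subset {F : Finset (ℤ × ℤ)}
    (hU : UniquelyDetermined F) (j j' : ℤ) :
    column F j ⊆ column F j' ∨ column F j' ⊆ column F j := by
  by_contra! h
  obtain ⟨i, h₁, h₃⟩ := not_subset.1 h.1
  obtain ⟨i', h₂, h₄⟩ := not_subset.1 h.2
  rw [mem_column] at h₁ h₂ h₃ h₄
  have hi : i ≠ i' := by rintro rfl; exact h₃ h₂
  have hF := hU ((F \ {(i, j), (i', j')}) ∪ {(i, j'), (i', j)})
    (fun k => by simp only [rowSum, card_filter]; exact sum_switch hi h₁ h₂ h₃ h₄ rfl)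
    (fun k => by
      simp only [colSum, card_filter]; exact sum_switch hi h₁ h₂ h₃ h₄ (add_comm _ _))
  exact h₃ (hF ▸ by simp)

def columnSets (F : Finset (ℤ × ℤ)) : Finset (Finset ℤ) :=
  (F.image Prod.snd).image (column F)

lemma column_mem_columnSets {F : Finset (ℤ × ℤ)} {i j : ℤ} (h : (i, j) ∈ F) :
    column F j ∈ columnSets F :=
  mem_image_of_mem _ (mem_image_of_mem Prod.snd h)

lemma UniquelyDetermined.card_columnSets_mul_succ_le {F : Finset (ℤ × ℤ)}
    (hU : UniquelyDetermined F) :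
    #(columnSets F) * (#(columnSets F) + 1) ≤ 2 * #F := by
  have hinj : Set.InjOn card (columnSets F : Set (Finset ℤ)) := by
    intro D hD D' hD' h
    obtain ⟨j, -, rfl⟩ := mem_image.1 hD
    obtain ⟨j', -, rfl⟩ := mem_image.1 hD'
    rcases hU.column_subset_or_subset j j' with hs | hs
    · exact eq_of_subset_of_card_le hs h.ge
    · exact (eq_of_subset_of_card_le hs h.le).symm
  have hpos : 0 ∉ (columnSets F).image card := by
    intro h0
    obtain ⟨D, hD, hD0⟩ := mem_image.1 h0
    obtain ⟨j, hj, rfl⟩ := mem_image.1 hD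
    obtain ⟨x, hx, rfl⟩ := mem_image.1 hj
    exact (card_pos.2 ⟨x.1, mem_column.2 hx⟩).ne' hD0
  calc #(columnSets F) * (#(columnSets F) + 1)
      = #((columnSets F).image card) * (#((columnSets F).image card) + 1) := by
        rw [card_image_of_injOn hinj]
    _ ≤ 2 * ∑ n ∈ (columnSets F).image card, n := card_mul_succ_le_two_mul_sum _ hpos
    _ = 2 * ∑ D ∈ columnSets F, #D := by rw [sum_image hinj]
    _ ≤ 2 * ∑ j ∈ F.image Prod.snd, #(column F j) := by
        gcongr; exact sum_image_le_of_nonneg fun _ _ => Nat.zero_le _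
    _ = 2 * #F := by
        simp only [card_column, colSum]
        rw [← card_eq_sum_card_fiberwise fun x hx => mem_image_of_mem Prod.snd hx]

def columnRank (F : Finset (ℤ × ℤ)) (j : ℤ) : ℕ := #{D ∈ columnSets F | D ⊆ column F j}

def rowRank (F : Finset (ℤ × ℤ)) (i : ℤ) : ℕ := #{D ∈ columnSets F | i ∉ D}

lemma UniquelyDetermined.mem_iff_rowRank_lt_columnRank {F : Finset (ℤ × ℤ)}
    (hU : UniquelyDetermined F) {i j : ℤ} : (i, j) ∈ F ↔ rowRank F i < columnRank F j := by
  constructor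
  · intro h
    apply card_lt_card
    rw [ssubset_iff_of_subset]
    · exact ⟨column F j, mem_filter.2 ⟨column_mem_columnSets h, subset_rfl⟩,
        fun h' => (mem_filter.1 h').2 (mem_column.2 h)⟩
    · intro D hD
      obtain ⟨hD, hi⟩ := mem_filter.1 hD
      obtain ⟨j', -, rfl⟩ := mem_image.1 hD
      refine mem_filter.2 ⟨hD, ?_⟩
      rcases hU.column_subset_or_subset j' j with hs | hs
      · exact hs
      · exact absurd (hs (mem_column.2 h)) hi
  · intro h
    by_contra hij
    refine h.not_ge (card_le_card fun D hD => ?_)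
    obtain ⟨hD, hs⟩ := mem_filter.1 hD
    exact mem_filter.2 ⟨hD, fun hi => hij (mem_column.1 (hs hi))⟩

theorem UniquelyDetermined.two_mul_card_sdiff_le {F : Finset (ℤ × ℤ)}
    (hU : UniquelyDetermined F) (G : Finset (ℤ × ℤ)) :
    2 * (#(F \ G) : ℤ) ≤ #(columnSets F) * lineError F G := by
  set Φ : ℤ × ℤ → ℤ := fun x => columnRank F x.2 - rowRank F x.1
  have hmem (x : ℤ × ℤ) : x ∈ F ↔ rowRank F x.1 < columnRank F x.2 :=
    hU.mem_iff_rowRank_lt_columnRank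
  have hF : ∀ x ∈ F \ G, 1 ≤ Φ x := fun x hx => by
    have := (hmem x).1 (mem_sdiff.1 hx).1
    simp only [Φ]; omega
  have hG : ∀ x ∈ G \ F, Φ x ≤ 0 := fun x hx => by
    have := (hmem x).not.1 (mem_sdiff.1 hx).2
    simp only [Φ]; omega
  have hcard : (#(F \ G) : ℤ) ≤ ∑ x ∈ F, Φ x - ∑ x ∈ G, Φ x := by
    have h₁ := card_nsmul_le_sum (F \ G) Φ 1 hF
    have h₂ := sum_nonpos hG
    rw [nsmul_one] at h₁
    rw [← sum_sdiff_sub_sum_sdiff]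
    linarith
  have hcol := two_mul_sum_sub_sum_le Prod.snd (columnRank F)
    (fun _ => card_le_card (filter_subset _ _)) F G
  have hrow := two_mul_sum_sub_sum_le Prod.fst (rowRank F)
    (fun _ => card_le_card (filter_subset _ _)) G F
  have hcols : ∑ᶠ j, |(#{x ∈ F | x.2 = j} : ℤ) - #{x ∈ G | x.2 = j}|
      = ∑ᶠ j, |(colSum F j : ℤ) - colSum G j| := rfl
  have hrows : ∑ᶠ i, |(#{x ∈ G | x.1 = i} : ℤ) - #{x ∈ F | x.1 = i}|
      = ∑ᶠ i, |(rowSum F i : ℤ) - rowSum G i| := finsum_congr fun _ => abs_sub_comm _ _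
  simp only [Φ, sum_sub_distrib] at hcard
  rw [hcols] at hcol
  rw [hrows] at hrow
  rw [lineError]
  linear_combination 2 * hcard + hcol + hrow

theorem alpers_type_bound_general
    (F1 F2 : Finset (ℤ × ℤ))
    (hU : UniquelyDetermined F1)
    (α : ℕ) (hα : 0 < α)
    (herr : lineError F1 F2 = 2 * α)
    (p : ℕ) (hp : p = (F1 ∩ F2).card) :
    (F1.card : ℝ) ≤ (p : ℝ) + ((α : ℝ) + 1) * ((α : ℝ) - 1/2)
      + ((α : ℝ) + 1) * Real.sqrt (2 * (p : ℝ) + (2 * (α : ℝ) - 1)^2 / 4) := by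
  set m := #(F1 \ F2)
  set d := #(columnSets F1)
  have hn : #F1 = p + m := hp ▸ (card_inter_add_card_sdiff F1 F2).symm
  have hm : m ≤ α * d := by
    have h := hU.two_mul_card_sdiff_le F2
    rw [herr] at h
    have : (m : ℤ) ≤ α * d := by linarith
    exact_mod_cast this
  have hsq : m ^ 2 ≤ 2 * α ^ 2 * (p + m) :=
    calc m ^ 2 ≤ (α * d) ^ 2 := Nat.pow_le_pow_left hm 2
      _ ≤ α ^ 2 * (d * (d + 1)) := by rw [mul_pow, sq d]; gcongr; omega
      _ ≤ α ^ 2 * (2 * #F1) := Nat.mul_le_mul_left _ hU.card_columnSets_mul_succ_le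
      _ = 2 * α ^ 2 * (p + m) := by rw [hn]; ring
  have hsq' : (m : ℝ) ^ 2 ≤ 2 * (α : ℝ) ^ 2 * (p + m) := by exact_mod_cast hsq
  rw [hn, Nat.cast_add, add_assoc]
  exact add_le_add_right (le_of_sq_le_two_mul_sq_mul (Nat.one_le_cast.2 hα) p.cast_nonneg hsq') _

theorem alpers_type_bound
    (F1 F2 : Finset (ℤ × ℤ))
    (hU : UniquelyDetermined F1)
    (hcard : F1.card = F2.card)
    (α : ℕ) (hα : 0 < α)
    (herr : lineError F1 F2 = 2 * α)
    (p : ℕ) (hp : p = (F1 ∩ F2).card) :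
    (F1.card : ℝ) ≤ (p : ℝ) + ((α : ℝ) + 1) * ((α : ℝ) - 1/2)
      + ((α : ℝ) + 1) * Real.sqrt (2 * (p : ℝ) + (2 * (α : ℝ) - 1)^2 / 4) :=
  alpers_type_bound_general F1 F2 hU α hα herr p hp
end
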